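/- arXiv:1402.5661 — 4 statements merged into one kernel-verified Lean document; each statement's English description precedes it below -/
import Mathlib

section
/- Let k be an algebraically closed field of characteristic zero, G a finite group, ε ∈ {+1, −1}, V an irreducible ε-small finite-dimensional representation of G over k, and H a normal subgroup of G. Suppose V contains two non-isomorphic irreducible H-submodules. Then every irreducible H-submodule of V is one-dimensional, the characters of H occurring in V are pairwise distinct (i.e. for every group homomorphism χ : H → kˣ the subspace {v ∈ V : h • v = χ(h) v for all h ∈ H} has dimension at most one), and moreover ε = −1 or dim_k V = 2. -/
open TensorProduct

namespace SmallRep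

variable {k G V : Type*}

section Defs
variable [CommSemiring k] [Monoid G] [AddCommMonoid V] [Module k V]

def IsSubrep (ρ : Representation k G V) (W : Submodule k V) : Prop :=
  ∀ g : G, ∀ v ∈ W, ρ g v ∈ W

def IsIrred (ρ : Representation k G V) : Prop :=
  Nontrivial V ∧ ∀ W : Submodule k V, IsSubrep ρ W → W = ⊥ ∨ W = ⊤

def SubIrred (ρ : Representation k G V) (W : Submodule k V) : Prop :=
  W ≠ ⊥ ∧ ∀ U : Submodule k V, U ≤ W → IsSubrep ρ U → U = ⊥ ∨ U = W

def TrivOn (ρ : Representation k G V) (W : Submodule k V) : Prop :=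
  ∀ g : G, ∀ v ∈ W, ρ g v = v

/-- The restriction of `ρ` to an invariant subspace, as a representation on `W`. -/
def subRep (ρ : Representation k G V) (W : Submodule k V) (hW : IsSubrep ρ W) :
    Representation k G W where
  toFun g := (ρ g).restrict (fun v hv => hW g v hv)
  map_one' := by ext v; simp [LinearMap.restrict_apply]
  map_mul' g₁ g₂ := by
    ext v
    simp [LinearMap.restrict_apply, map_mul, Module.End.mul_apply]

/-- Two representations are isomorphic (equivariantly linearly equivalent). -/
def RepIso {W₁ W₂ : Type*} [AddCommMonoid W₁] [Module k W₁] [AddCommMonoid W₂] [Module k W₂]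
    (ρ₁ : Representation k G W₁) (ρ₂ : Representation k G W₂) : Prop :=
  ∃ e : W₁ ≃ₗ[k] W₂, ∀ (g : G) (w : W₁), e (ρ₁ g w) = ρ₂ g (e w)

end Defs

section Chars
variable [CommSemiring k] [Group G] [AddCommMonoid V] [Module k V]

/-- The weight space of a character `χ` of a subgroup `K`. -/
def weightSpace (ρ : Representation k G V) (K : Subgroup G) (χ : K →* kˣ) :
    Submodule k V where
  carrier := {v | ∀ h : K, ρ (h : G) v = (χ h : k) • v}
  add_mem' := by
    intro a b ha hb h
    simp [map_add, ha h, hb h, smul_add]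
  zero_mem' := by intro h; simp
  smul_mem' := by
    intro c a ha h
    rw [map_smul, ha h, smul_comm]

/-- Conjugation action of `G` on characters of a normal subgroup `K`. -/
def conjChar {K : Subgroup G} (hK : K.Normal) (g : G) (χ : K →* kˣ) : K →* kˣ :=
  haveI := hK
  χ.comp (MulAut.conjNormal g⁻¹).toMonoidHom

end Chars

section Tensor
variable [CommRing k] [Group G] [AddCommGroup V] [Module k V]

noncomputable def tau (k V : Type*) [CommRing k] [AddCommGroup V] [Module k V] :
    Module.End k (V ⊗[k] V) :=
  (TensorProduct.comm k V V).toLinearMap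

noncomputable def Tsq (k V : Type*) [CommRing k] [AddCommGroup V] [Module k V] (ε : ℤ) :
    Submodule k (V ⊗[k] V) :=
  Module.End.eigenspace (tau k V) (ε : k)

noncomputable def IsSmall (ρ : Representation k G V) (ε : ℤ) : Prop :=
  (IsSubrep (ρ.tprod ρ) (Tsq k V ε) ∧ SubIrred (ρ.tprod ρ) (Tsq k V ε)) ∨
  ∃ W₁ W₂ : Submodule k (V ⊗[k] V),
    IsSubrep (ρ.tprod ρ) W₁ ∧ IsSubrep (ρ.tprod ρ) W₂ ∧
    Disjoint W₁ W₂ ∧ W₁ ⊔ W₂ = Tsq k V ε ∧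
    SubIrred (ρ.tprod ρ) W₁ ∧ Module.finrank k W₂ = 1 ∧ TrivOn (ρ.tprod ρ) W₂

/-- A representation is very small if both its symmetric and alternating squares
are irreducible. -/
noncomputable def VerySmall (ρ : Representation k G V) : Prop :=
  IsIrred ρ ∧ SubIrred (ρ.tprod ρ) (Tsq k V 1) ∧ SubIrred (ρ.tprod ρ) (Tsq k V (-1))

/-- `ρ` is strongly irreducible. -/
def StronglyIrred (ρ : Representation k G V) : Prop :=
  ∀ H : Subgroup G, H.Normal → H.FiniteIndex → ¬ H ≤ Subgroup.center G →
    IsIrred (ρ.comp H.subtype)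

/-- `ρ` is `2`-homogeneous monomial. -/
def TwoHomogMonomial (ρ : Representation k G V) : Prop :=
  ∃ K : Subgroup G, ∃ hK : K.Normal,
    (∀ x y : K, x * y = y * x) ∧
    (∀ χ : K →* kˣ, Module.finrank k (weightSpace ρ K χ) ≤ 1) ∧
    (⨆ χ : K →* kˣ, weightSpace ρ K χ) = ⊤ ∧
    (∀ χ₁ χ₂ χ₃ χ₄ : K →* kˣ,
      weightSpace ρ K χ₁ ≠ ⊥ → weightSpace ρ K χ₂ ≠ ⊥ →
      weightSpace ρ K χ₃ ≠ ⊥ → weightSpace ρ K χ₄ ≠ ⊥ →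
      χ₁ ≠ χ₂ → χ₃ ≠ χ₄ →
      ∃ g : G, ({conjChar hK g χ₁, conjChar hK g χ₂} : Set (K →* kˣ)) = {χ₃, χ₄}) ∧
    (∀ g : G, (∀ χ : K →* kˣ, weightSpace ρ K χ ≠ ⊥ → conjChar hK g χ = χ) ↔ g ∈ K)

/-- `V` carries a nondegenerate quadratic form with respect to which `G` acts by
similitudes. -/
def QuadSimilitude (ρ : Representation k G V) : Prop :=
  ∃ q : QuadraticForm k V, ∃ lam : G →* kˣ,
    LinearMap.BilinForm.Nondegenerate (QuadraticMap.polarBilin q) ∧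
    ∀ (g : G) (v : V), q (ρ g v) = (lam g : k) * q v

/-- External tensor product of two representations. -/
noncomputable def extTensor {G₁ G₂ W₁ W₂ : Type*} [Group G₁] [Group G₂]
    [AddCommMonoid W₁] [Module k W₁] [AddCommMonoid W₂] [Module k W₂]
    (ρ₁ : Representation k G₁ W₁) (ρ₂ : Representation k G₂ W₂) :
    Representation k (G₁ × G₂) (W₁ ⊗[k] W₂) :=
  Representation.tprod (ρ₁.comp (MonoidHom.fst G₁ G₂)) (ρ₂.comp (MonoidHom.snd G₁ G₂))

end Tensor

section Groups

/-- A finite `p`-group is extraspecial if its center equals its commutator subgroup,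
has order `p`, and the central quotient is a nontrivial elementary abelian `p`-group. -/
def IsExtraspecial (p : ℕ) (E : Type*) [Group E] : Prop :=
  Subgroup.center E = commutator E ∧ Nat.card (Subgroup.center E) = p ∧
  Nontrivial (E ⧸ Subgroup.center E) ∧
  (∀ x y : E ⧸ Subgroup.center E, x * y = y * x) ∧
  (∀ x : E ⧸ Subgroup.center E, x ^ p = 1)

/-- A group is quasisimple if it is perfect and its central quotient is a
non-abelian simple group. -/
def IsQuasisimple (H : Type*) [Group H] : Prop :=
  commutator H = ⊤ ∧ IsSimpleGroup (H ⧸ Subgroup.center H) ∧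
  ∃ x y : H ⧸ Subgroup.center H, x * y ≠ y * x

end Groups

/-!
Restricted to `H`, `V` is a direct sum of `G`-translates of `W₁` (Clifford), hence the direct sum
of its isotypic components. Since `G` maps irreducible `H`-submodules to irreducible ones and
preserves isomorphism, the span `M` of all `Y ⊗ Z` with `Y ≇ Z` irreducible is `G`-stable, so
`B = T_ε ∩ M` is a subrepresentation of `T_ε` and `ε`-smallness forces `dim B ≤ 1` or
`dim T_ε ≤ dim B + 1`. For the projection `P` onto an isotypic component along the others,
`P ⊗ P` kills `M`.

If `dim B ≤ 1`: for `y ≠ 0` in the isotypic component `E` of `W₁`, `x ↦ x ⊗ y + ε y ⊗ x` embeds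
the sum of the other components into `B`, and symmetrically, so `V` is the sum of two lines.
If `dim T_ε ≤ dim B + 1`: by the previous remark `T_ε` cannot contain nonzero vectors from the
squares of two different isotypic components; for `ε = 1` take `w₁ ⊗ w₁` and `w₂ ⊗ w₂`, for
`ε = -1` a wedge of two independent vectors of one component and its `G`-translate into another.
Either way every isotypic component is a line, which gives the first two claims.
-/

section Invariant

variable [CommRing k] [Monoid G] [AddCommGroup V] [Module k V] {σ : Representation k G V}
  {Y Z U : Submodule k V}

lemma IsSubrep.inf (hY : IsSubrep σ Y) (hZ : IsSubrep σ Z) : IsSubrep σ (Y ⊓ Z) :=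
  fun g v hv => ⟨hY g v hv.1, hZ g v hv.2⟩

lemma isSubrep_iSup {ι : Sort*} {P : ι → Submodule k V} (hP : ∀ i, IsSubrep σ (P i)) :
    IsSubrep σ (⨆ i, P i) :=
  fun g => (iSup_le fun i x hx => le_iSup P i (hP i g x hx) :
    ⨆ i, P i ≤ (⨆ i, P i).comap (σ g))

def IsIrredSubrep (σ : Representation k G V) (W : Submodule k V) : Prop :=
  IsSubrep σ W ∧ SubIrred σ W

lemma IsIrredSubrep.ne_bot (hY : IsIrredSubrep σ Y) : Y ≠ ⊥ := hY.2.1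

lemma IsIrredSubrep.inf_eq_bot_or_le (hY : IsIrredSubrep σ Y) (hU : IsSubrep σ (Y ⊓ U)) :
    Y ⊓ U = ⊥ ∨ Y ≤ U :=
  (hY.2.2 _ inf_le_left hU).imp_right inf_eq_left.1

lemma IsIrredSubrep.disjoint_or_le (hY : IsIrredSubrep σ Y) (hU : IsSubrep σ U) :
    Disjoint Y U ∨ Y ≤ U :=
  (hY.inf_eq_bot_or_le (hY.1.inf hU)).imp_left disjoint_iff.2

def SubrepIso (σ : Representation k G V) (Y Z : Submodule k V) : Prop :=
  ∃ (hY : IsSubrep σ Y) (hZ : IsSubrep σ Z), RepIso (subRep σ Y hY) (subRep σ Z hZ)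

lemma SubrepIso.symm : SubrepIso σ Y Z → SubrepIso σ Z Y := by
  rintro ⟨hY, hZ, e, he⟩
  exact ⟨hZ, hY, e.symm, fun g w =>
    e.injective (by rw [e.apply_symm_apply, he, e.apply_symm_apply])⟩

lemma SubrepIso.trans : SubrepIso σ Y Z → SubrepIso σ Z U → SubrepIso σ Y U := by
  rintro ⟨hY, hZ, e, he⟩ ⟨_, hU, f, hf⟩
  exact ⟨hY, hU, e.trans f, fun g w => (congrArg f (he g w)).trans (hf g (e w))⟩

/-- Schur's lemma. -/
lemma SubrepIso.of_linearMap (hY : IsIrredSubrep σ Y) (hZ : IsIrredSubrep σ Z) (f : V →ₗ[k] V)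
    (hf : ∀ g, ∀ y ∈ Y, f (σ g y) = σ g (f y)) (hfZ : Y.map f ≤ Z)
    (hf0 : ¬ Y ≤ LinearMap.ker f) : SubrepIso σ Y Z := by
  have hker : Y ⊓ LinearMap.ker f = ⊥ := by
    refine (hY.inf_eq_bot_or_le fun g v hv => ⟨hY.1 g v hv.1, ?_⟩).resolve_right hf0
    show f (σ g v) = 0
    rw [hf g v hv.1, LinearMap.mem_ker.1 hv.2, map_zero]
  have hrange : Y.map f = Z := by
    refine (hZ.2.2 _ hfZ ?_).resolve_left ?_
    · rintro g _ ⟨y, hy, rfl⟩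
      exact ⟨σ g y, hY.1 g y hy, hf g y hy⟩
    · rwa [← le_bot_iff, Submodule.map_le_iff_le_comap, Submodule.comap_bot]
  let φ : Y →ₗ[k] Z := (f.domRestrict Y).codRestrict Z fun y => hfZ ⟨y, y.2, rfl⟩
  have hφ : Function.Bijective φ := by
    refine ⟨fun a b hab => ?_, fun z => ?_⟩
    · have hab : f (a - b) = 0 := by
        simpa [sub_eq_zero, φ, Subtype.ext_iff] using hab
      have hmem : (a : V) - b ∈ Y ⊓ LinearMap.ker f := ⟨sub_mem a.2 b.2, hab⟩
      rw [hker, Submodule.mem_bot, sub_eq_zero] at hmem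
      exact Subtype.ext hmem
    · obtain ⟨y, hy, hyz⟩ : (z : V) ∈ Y.map f := hrange ▸ z.2
      exact ⟨⟨y, hy⟩, Subtype.ext hyz⟩
  exact ⟨hY.1, hZ.1, LinearEquiv.ofBijective φ hφ, fun g y => Subtype.ext (hf g y y.2)⟩

end Invariant

section Lines

variable [Field k] [Monoid G] [AddCommGroup V] [Module k V] {σ : Representation k G V}
  {v w : V} {c : G → k}

lemma isIrredSubrep_span_singleton (hv0 : v ≠ 0) (hv : ∀ g, σ g v = c g • v) :
    IsIrredSubrep σ (k ∙ v) := by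
  refine ⟨fun g u hu => ?_, by simpa using hv0,
    fun U hU _ => (nonzero_span_atom v hv0).le_iff.1 hU⟩
  obtain ⟨a, rfl⟩ := Submodule.mem_span_singleton.1 hu
  rw [map_smul, hv, smul_smul]
  exact Submodule.smul_mem _ _ (Submodule.mem_span_singleton_self v)

lemma subrepIso_span_singleton (hv0 : v ≠ 0) (hw0 : w ≠ 0) (hv : ∀ g, σ g v = c g • v)
    (hw : ∀ g, σ g w = c g • w) : SubrepIso σ (k ∙ v) (k ∙ w) := by
  obtain ⟨φ, hφ, -⟩ := Submodule.exists_dual_map_eq_bot_of_notMem (R := k) (p := ⊥)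
    (by simpa using hv0) inferInstance
  set f : V →ₗ[k] V := (φ v)⁻¹ • φ.smulRight w
  have hf : ∀ a : k, f (a • v) = a • w := fun a => by simp [f, smul_smul, hφ]
  refine .of_linearMap (isIrredSubrep_span_singleton hv0 hv) (isIrredSubrep_span_singleton hw0 hw)
    f (fun g y hy => ?_) ?_ fun h => hw0 ?_
  · obtain ⟨a, rfl⟩ := Submodule.mem_span_singleton.1 hy
    rw [map_smul, hv, smul_smul, hf, hf, map_smul, hw, smul_smul, mul_comm]
  · rw [Submodule.map_le_iff_le_comap, Submodule.span_singleton_le_iff_mem, Submodule.mem_comap,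
      ← one_smul k v, hf]
    exact Submodule.smul_mem _ _ (Submodule.mem_span_singleton_self w)
  · have hv := h (Submodule.mem_span_singleton_self v)
    rwa [LinearMap.mem_ker, ← one_smul k v, hf, one_smul] at hv

end Lines

section Decomposition

lemma exists_supIndep_subset_sup_eq {α ι : Type*} [Lattice α] [IsModularLattice α] [OrderBot α]
    [DecidableEq ι] {f : ι → α}
    (hf : ∀ i (t : Finset ι), Disjoint (f i) (t.sup f) ∨ f i ≤ t.sup f) (s : Finset ι) :
    ∃ t ⊆ s, t.SupIndep f ∧ t.sup f = s.sup f := by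
  induction s using Finset.induction_on with
  | empty => exact ⟨∅, subset_rfl, Finset.supIndep_empty f, rfl⟩
  | insert i s _ ih =>
    obtain ⟨t, hts, ht, hsup⟩ := ih
    rcases hf i t with h | h
    · exact ⟨insert i t, Finset.insert_subset_insert i hts, ht.insert h, by simp [hsup]⟩
    · exact ⟨t, hts.trans (Finset.subset_insert i s), ht, by simp [← hsup, h]⟩

lemma projection_apply_comm {R E : Type*} [Ring R] [AddCommGroup E] [Module R E]
    {p q : Submodule R E} (hpq : IsCompl p q) {f : E →ₗ[R] E} (hp : p ≤ p.comap f)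
    (hq : q ≤ q.comap f) (v : E) : p.projection q hpq (f v) = f (p.projection q hpq v) := by
  conv_lhs => rw [← Submodule.projection_add_projection_eq_self hpq v]
  rw [map_add f, map_add,
    Submodule.projection_apply_of_mem_left hpq (hp (Submodule.projection_apply_mem hpq v)),
    Submodule.projection_apply_of_mem_right hpq (hq (Submodule.projection_apply_mem hpq.symm v)),
    add_zero]

variable [CommRing k] [Monoid G] [AddCommGroup V] [Module k V]

structure IsIrredDecomposition {ι : Type*} (σ : Representation k G V) (X : ι → Submodule k V) :
    Prop where
  isIrredSubrep : ∀ i, IsIrredSubrep σ (X i)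
  indep : iSupIndep X
  iSup_eq_top : ⨆ i, X i = ⊤

/-- The blocks of `X` isomorphic to `Y` span the isotypic component of `Y`. -/
def isotypic {ι : Type*} (σ : Representation k G V) (X : ι → Submodule k V)
    (Y : Submodule k V) : Submodule k V :=
  ⨆ (i) (_ : SubrepIso σ (X i) Y), X i

def isotypicCompl {ι : Type*} (σ : Representation k G V) (X : ι → Submodule k V)
    (Y : Submodule k V) : Submodule k V :=
  ⨆ (i) (_ : ¬ SubrepIso σ (X i) Y), X i

variable {ι : Type*} {σ : Representation k G V} {X : ι → Submodule k V} {Y Z : Submodule k V}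

lemma isotypic_congr (h : SubrepIso σ Y Z) : isotypic σ X Y = isotypic σ X Z :=
  iSup_congr fun _ => iSup_congr_Prop ⟨fun hi => hi.trans h, fun hi => hi.trans h.symm⟩
    fun _ => rfl

lemma isotypic_le_isotypicCompl (h : ¬ SubrepIso σ Y Z) :
    isotypic σ X Y ≤ isotypicCompl σ X Z :=
  iSup₂_le fun i hi => le_iSup₂_of_le i (fun hZ => h (hi.symm.trans hZ)) le_rfl

namespace IsIrredDecomposition

lemma isCompl (hX : IsIrredDecomposition σ X) (i : ι) :
    IsCompl (X i) (⨆ (j) (_ : j ≠ i), X j) :=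
  ⟨hX.indep i, codisjoint_iff.2 (by rw [← iSup_split_single, hX.iSup_eq_top])⟩

noncomputable def proj (hX : IsIrredDecomposition σ X) (i : ι) : V →ₗ[k] V :=
  (X i).projection _ (hX.isCompl i)

lemma proj_mem (hX : IsIrredDecomposition σ X) (i : ι) (v : V) : hX.proj i v ∈ X i :=
  Submodule.projection_apply_mem _ v

lemma proj_of_mem (hX : IsIrredDecomposition σ X) {i : ι} {v : V} (hv : v ∈ X i) :
    hX.proj i v = v :=
  Submodule.projection_apply_of_mem_left _ hv

lemma proj_of_mem_ne (hX : IsIrredDecomposition σ X) {i j : ι} (hij : j ≠ i) {v : V}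
    (hv : v ∈ X j) : hX.proj i v = 0 :=
  Submodule.projection_apply_of_mem_right _
    (Submodule.mem_iSup_of_mem j (Submodule.mem_iSup_of_mem hij hv))

lemma proj_comm (hX : IsIrredDecomposition σ X) (i : ι) (g : G) (v : V) :
    hX.proj i (σ g v) = σ g (hX.proj i v) :=
  projection_apply_comm _ (fun v hv => (hX.isIrredSubrep i).1 g v hv)
    (fun v hv => isSubrep_iSup (fun j => isSubrep_iSup fun _ => (hX.isIrredSubrep j).1) g v hv) v

lemma sum_proj [Fintype ι] (hX : IsIrredDecomposition σ X) (v : V) : ∑ i, hX.proj i v = v := by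
  classical
  refine Submodule.iSup_induction X (motive := fun v => ∑ i, hX.proj i v = v)
    (hX.iSup_eq_top ▸ Submodule.mem_top) (fun j x hx => ?_) (by simp) fun x y hx hy => ?_
  · rw [Finset.sum_eq_single j (fun i _ hij => hX.proj_of_mem_ne (Ne.symm hij) hx) (by simp),
      hX.proj_of_mem hx]
  · simp only [map_add, Finset.sum_add_distrib, hx, hy]

lemma le_isotypic [Fintype ι] (hX : IsIrredDecomposition σ X) (hY : IsIrredSubrep σ Y) :
    Y ≤ isotypic σ X Y := by
  intro y hy
  rw [← hX.sum_proj y]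
  refine Submodule.sum_mem _ fun i _ => ?_
  by_cases h : Y ≤ LinearMap.ker (hX.proj i)
  · rw [LinearMap.mem_ker.1 (h hy)]
    exact zero_mem _
  · have hiso := SubrepIso.of_linearMap hY (hX.isIrredSubrep i) (hX.proj i)
      (fun g v _ => hX.proj_comm i g v)
      (Submodule.map_le_iff_le_comap.2 fun v _ => hX.proj_mem i v) h
    exact Submodule.mem_iSup_of_mem i (Submodule.mem_iSup_of_mem hiso.symm (hX.proj_mem i y))

lemma le_isotypicCompl [Fintype ι] (hX : IsIrredDecomposition σ X) (hY : IsIrredSubrep σ Y)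
    (h : ¬ SubrepIso σ Y Z) : Y ≤ isotypicCompl σ X Z :=
  (hX.le_isotypic hY).trans (isotypic_le_isotypicCompl h)

lemma isCompl_isotypic (hX : IsIrredDecomposition σ X) (Y : Submodule k V) :
    IsCompl (isotypic σ X Y) (isotypicCompl σ X Y) :=
  ⟨hX.indep.disjoint_biSup_biSup (s := {i | SubrepIso σ (X i) Y})
      (t := {i | ¬ SubrepIso σ (X i) Y}) (Set.disjoint_left.2 fun _ hi hi' => hi' hi),
    codisjoint_iff.2 (by rw [isotypic, isotypicCompl, ← iSup_split, hX.iSup_eq_top])⟩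

noncomputable def isotypicProj (hX : IsIrredDecomposition σ X) (Y : Submodule k V) :
    V →ₗ[k] V :=
  (isotypic σ X Y).projection _ (hX.isCompl_isotypic Y)

lemma isotypicProj_of_mem (hX : IsIrredDecomposition σ X) {v : V} (hv : v ∈ isotypic σ X Y) :
    hX.isotypicProj Y v = v :=
  Submodule.projection_apply_of_mem_left _ hv

lemma isotypicProj_of_mem_compl (hX : IsIrredDecomposition σ X) {v : V}
    (hv : v ∈ isotypicCompl σ X Y) : hX.isotypicProj Y v = 0 :=
  Submodule.projection_apply_of_mem_right _ hv

end IsIrredDecomposition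

end Decomposition

section TensorSquare

variable [CommRing k] [AddCommGroup V] [Module k V]

def tmulSub (P Q : Submodule k V) : Submodule k (V ⊗[k] V) :=
  Submodule.map₂ (TensorProduct.mk k V V) P Q

lemma tmul_mem_tmulSub {P Q : Submodule k V} {x y : V} (hx : x ∈ P) (hy : y ∈ Q) :
    x ⊗ₜ[k] y ∈ tmulSub P Q :=
  Submodule.apply_mem_map₂ _ hx hy

lemma tmulSub_le_iff {P Q : Submodule k V} {S : Submodule k (V ⊗[k] V)} :
    tmulSub P Q ≤ S ↔ ∀ x ∈ P, ∀ y ∈ Q, x ⊗ₜ[k] y ∈ S :=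
  Submodule.map₂_le

lemma tau_tmul (x y : V) : tau k V (x ⊗ₜ y) = y ⊗ₜ x := TensorProduct.comm_tmul k V V x y

lemma tmul_add_smul_tmul_mem_Tsq {ε : ℤ} (hε : ε = 1 ∨ ε = -1) (x y : V) :
    x ⊗ₜ[k] y + (ε : k) • y ⊗ₜ[k] x ∈ Tsq k V ε := by
  rw [Tsq, Module.End.mem_eigenspace_iff, map_add, map_smul, tau_tmul, tau_tmul, smul_add,
    smul_smul, add_comm]
  rcases hε with rfl | rfl <;> simp

lemma tmul_self_mem_Tsq_one (x : V) : x ⊗ₜ[k] x ∈ Tsq k V 1 := by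
  simp [Tsq, tau_tmul]

lemma isSubrep_Tsq [Monoid G] (ρ : Representation k G V) (ε : ℤ) :
    IsSubrep (ρ.tprod ρ) (Tsq k V ε) := by
  intro g v hv
  have hcomm : tau k V ∘ₗ ρ.tprod ρ g = ρ.tprod ρ g ∘ₗ tau k V :=
    TensorProduct.ext' fun x y => by simp [tau_tmul, Representation.tprod_apply]
  rw [Tsq, Module.End.mem_eigenspace_iff] at hv ⊢
  rw [← LinearMap.comp_apply, hcomm, LinearMap.comp_apply, hv, map_smul]

lemma tprod_mem_tmulSub_map [Monoid G] (ρ : Representation k G V) (g : G)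
    {P Q : Submodule k V} {u : V ⊗[k] V} (hu : u ∈ tmulSub P Q) :
    ρ.tprod ρ g u ∈ tmulSub (P.map (ρ g)) (Q.map (ρ g)) :=
  (tmulSub_le_iff.2 fun x hx y hy => by
    simpa [Representation.tprod_apply] using
      tmul_mem_tmulSub (Submodule.mem_map_of_mem hx) (Submodule.mem_map_of_mem hy) :
    tmulSub P Q ≤ (tmulSub (P.map (ρ g)) (Q.map (ρ g))).comap (ρ.tprod ρ g)) hu

end TensorSquare

section Nonvanishing

variable [Field k] [AddCommGroup V] [Module k V]

lemma exists_dual_ne_zero_of_notMem {x : V} {p : Submodule k V} (hx : x ∉ p) :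
    ∃ f : Module.Dual k V, f x ≠ 0 ∧ ∀ y ∈ p, f y = 0 := by
  obtain ⟨f, hf, hp⟩ := Submodule.exists_dual_map_eq_bot_of_notMem (R := k) hx inferInstance
  exact ⟨f, hf, fun y hy => by simpa [hp] using Submodule.mem_map_of_mem (f := f) hy⟩

lemma tmul_ne_zero {x y : V} (hx : x ≠ 0) (hy : y ≠ 0) : x ⊗ₜ[k] y ≠ 0 := by
  obtain ⟨f, hf, -⟩ := exists_dual_ne_zero_of_notMem (p := (⊥ : Submodule k V)) (by simpa using hx)
  obtain ⟨g, hg, -⟩ := exists_dual_ne_zero_of_notMem (p := (⊥ : Submodule k V)) (by simpa using hy)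
  intro h
  have := congrArg (TensorProduct.dualDistrib k V V (f ⊗ₜ g)) h
  rw [TensorProduct.dualDistrib_apply, map_zero] at this
  exact mul_ne_zero hf hg this

lemma tmul_add_smul_tmul_ne_zero {x y : V} (h : LinearIndependent k ![x, y]) (c : k) :
    x ⊗ₜ[k] y + c • y ⊗ₜ[k] x ≠ 0 := by
  have hx : x ∉ k ∙ y := fun hx => by
    obtain ⟨a, rfl⟩ := Submodule.mem_span_singleton.1 hx
    simpa using (LinearIndependent.pair_iff.1 h 1 (-a) (by simp)).1
  have hy : y ∉ k ∙ x := fun hy => by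
    obtain ⟨a, rfl⟩ := Submodule.mem_span_singleton.1 hy
    simpa using (LinearIndependent.pair_iff.1 h (-a) 1 (by simp)).2
  obtain ⟨f, hf, hfy⟩ := exists_dual_ne_zero_of_notMem hx
  obtain ⟨g, hg, -⟩ := exists_dual_ne_zero_of_notMem hy
  intro h0
  have := congrArg (TensorProduct.dualDistrib k V V (f ⊗ₜ g)) h0
  simp only [map_add, map_smul, TensorProduct.dualDistrib_apply, map_zero,
    hfy y (Submodule.mem_span_singleton_self y), zero_mul, smul_zero, add_zero] at this
  exact mul_ne_zero hf hg this

lemma linearIndependent_pair_of_disjoint {P Q : Submodule k V} (hPQ : Disjoint P Q) {x y : V}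
    (hx : x ∈ P) (hy : y ∈ Q) (hx0 : x ≠ 0) (hy0 : y ≠ 0) : LinearIndependent k ![x, y] := by
  refine LinearIndependent.pair_iff.2 fun s t hst => ?_
  have hs : s • x = 0 := (Submodule.disjoint_def.1 hPQ) _ (Submodule.smul_mem _ _ hx)
    (by rw [eq_neg_of_add_eq_zero_left hst]; exact neg_mem (Submodule.smul_mem _ _ hy))
  rw [hs, zero_add] at hst
  exact ⟨(smul_eq_zero.1 hs).resolve_right hx0, (smul_eq_zero.1 hst).resolve_right hy0⟩

lemma exists_linearIndependent_pair_mem {S : Submodule k V} [FiniteDimensional k S]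
    (hS : 1 < Module.finrank k S) : ∃ x ∈ S, ∃ y ∈ S, LinearIndependent k ![x, y] := by
  obtain ⟨x, hx, hx0⟩ :=
    Submodule.exists_mem_ne_zero_of_ne_bot (Submodule.one_le_finrank_iff.1 hS.le)
  obtain ⟨y, hxy⟩ := exists_linearIndependent_pair_of_one_lt_finrank hS
    (x := ⟨x, hx⟩) fun h => hx0 (congrArg Subtype.val h)
  refine ⟨x, hx, y, y.2, LinearIndependent.pair_iff.2 fun s t hst => ?_⟩
  exact LinearIndependent.pair_iff.1 hxy s t (Subtype.ext (by simpa using hst))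

end Nonvanishing

section MixedPart

variable [CommRing k] [Monoid G] [AddCommGroup V] [Module k V] {σ : Representation k G V}
  {Y Z : Submodule k V}

def mixedPart (σ : Representation k G V) : Submodule k (V ⊗[k] V) :=
  ⨆ (Y : Submodule k V) (Z : Submodule k V)
    (_ : IsIrredSubrep σ Y ∧ IsIrredSubrep σ Z ∧ ¬ SubrepIso σ Y Z), tmulSub Y Z

lemma tmulSub_le_mixedPart (hY : IsIrredSubrep σ Y) (hZ : IsIrredSubrep σ Z)
    (hYZ : ¬ SubrepIso σ Y Z) : tmulSub Y Z ≤ mixedPart σ :=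
  le_iSup₂_of_le Y Z (le_iSup_of_le ⟨hY, hZ, hYZ⟩ le_rfl)

namespace IsIrredDecomposition

variable {ι : Type*} {X : ι → Submodule k V}

lemma tmulSub_isotypic_le_mixedPart (hX : IsIrredDecomposition σ X) (Y : Submodule k V) :
    tmulSub (isotypic σ X Y) (isotypicCompl σ X Y) ≤ mixedPart σ ∧
      tmulSub (isotypicCompl σ X Y) (isotypic σ X Y) ≤ mixedPart σ := by
  simp only [tmulSub, isotypic, isotypicCompl, Submodule.map₂_iSup_left,
    Submodule.map₂_iSup_right]
  exact ⟨iSup₂_le fun j hj => iSup₂_le fun i hi => tmulSub_le_mixedPart (hX.isIrredSubrep i)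
      (hX.isIrredSubrep j) fun h => hj (h.symm.trans hi),
    iSup₂_le fun j hj => iSup₂_le fun i hi => tmulSub_le_mixedPart (hX.isIrredSubrep i)
      (hX.isIrredSubrep j) fun h => hi (h.trans hj)⟩

lemma map_isotypicProj_of_mem (hX : IsIrredDecomposition σ X) {u : V ⊗[k] V}
    (hu : u ∈ tmulSub (isotypic σ X Y) (isotypic σ X Y)) :
    TensorProduct.map (hX.isotypicProj Y) (hX.isotypicProj Y) u = u :=
  (tmulSub_le_iff.2 fun x hx y hy => by
    simp [LinearMap.mem_eqLocus, hX.isotypicProj_of_mem hx, hX.isotypicProj_of_mem hy] :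
    _ ≤ LinearMap.eqLocus (TensorProduct.map (hX.isotypicProj Y) (hX.isotypicProj Y))
      LinearMap.id) hu

lemma map_isotypicProj_of_mem_compl (hX : IsIrredDecomposition σ X) {P Q : Submodule k V}
    (hP : P ≤ isotypicCompl σ X Y) {u : V ⊗[k] V} (hu : u ∈ tmulSub P Q) :
    TensorProduct.map (hX.isotypicProj Y) (hX.isotypicProj Y) u = 0 :=
  (tmulSub_le_iff.2 fun x hx y _ => by simp [hX.isotypicProj_of_mem_compl (hP hx)] :
    _ ≤ LinearMap.ker (TensorProduct.map (hX.isotypicProj Y) (hX.isotypicProj Y))) hu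

lemma mixedPart_le_ker [Fintype ι] (hX : IsIrredDecomposition σ X) (Y : Submodule k V) :
    mixedPart σ ≤ LinearMap.ker (TensorProduct.map (hX.isotypicProj Y) (hX.isotypicProj Y)) :=
  iSup₂_le fun Z Z' => iSup_le fun ⟨hZ, hZ', hZZ'⟩ => tmulSub_le_iff.2 fun z hz z' hz' => by
    rw [LinearMap.mem_ker, TensorProduct.map_tmul]
    by_cases h : SubrepIso σ Z Y
    · rw [hX.isotypicProj_of_mem_compl
        (hX.le_isotypicCompl hZ' (fun h' => hZZ' (h.trans h'.symm)) hz'), TensorProduct.tmul_zero]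
    · rw [hX.isotypicProj_of_mem_compl (hX.le_isotypicCompl hZ h hz), TensorProduct.zero_tmul]

end IsIrredDecomposition

end MixedPart

section Dimension

variable [Field k] [AddCommGroup V] [Module k V]

lemma IsSmall.finrank_le_one_or [Group G] [FiniteDimensional k V] {ρ : Representation k G V}
    {ε : ℤ} (hsmall : IsSmall ρ ε) {S : Submodule k (V ⊗[k] V)} (hS : IsSubrep (ρ.tprod ρ) S)
    (hST : S ≤ Tsq k V ε) :
    Module.finrank k S ≤ 1 ∨ Module.finrank k (Tsq k V ε) ≤ Module.finrank k S + 1 := by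
  rcases hsmall with ⟨-, hT⟩ | ⟨I, L, hI, -, hIL, hsup, hIirr, hL, -⟩
  · rcases hT.2 S hST hS with rfl | rfl
    · simp
    · omega
  have hIL' := Submodule.finrank_sup_add_finrank_inf_eq I L
  rw [disjoint_iff.1 hIL, finrank_bot, hsup, hL] at hIL'
  rcases IsIrredSubrep.inf_eq_bot_or_le ⟨hI, hIirr⟩ (hI.inf hS) with h | h
  · have hIS := Submodule.finrank_sup_add_finrank_inf_eq I S
    have hle := Submodule.finrank_mono (sup_le (hsup ▸ le_sup_left) hST : I ⊔ S ≤ Tsq k V ε)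
    rw [h, finrank_bot] at hIS
    omega
  · have := Submodule.finrank_mono h
    omega

lemma finrank_lt_finrank_sup_span {W : Type*} [AddCommGroup W] [Module k W]
    [FiniteDimensional k W] {S : Submodule k W} {Φ : W →ₗ[k] W} (hS : S ≤ LinearMap.ker Φ)
    {u : W} (hu : Φ u ≠ 0) : Module.finrank k S < Module.finrank k ↥(S ⊔ k ∙ u) :=
  Submodule.finrank_lt_finrank_of_lt
    (left_lt_sup.2 fun h => hu (hS (h (Submodule.mem_span_singleton_self u))))

lemma finrank_add_two_le {W : Type*} [AddCommGroup W] [Module k W] [FiniteDimensional k W]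
    {B T : Submodule k W} (hBT : B ≤ T) {u₁ u₂ : W} (hu₁ : u₁ ∈ T) (hu₂ : u₂ ∈ T)
    {Φ₁ Φ₂ : W →ₗ[k] W} (hB₁ : B ≤ LinearMap.ker Φ₁) (hB₂ : B ≤ LinearMap.ker Φ₂)
    (h₁ : Φ₁ u₁ ≠ 0) (h₁₂ : Φ₁ u₂ = 0) (h₂ : Φ₂ u₂ ≠ 0) :
    Module.finrank k B + 2 ≤ Module.finrank k T := by
  have hlt₂ := finrank_lt_finrank_sup_span hB₂ h₂
  have hlt₁ := finrank_lt_finrank_sup_span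
    (sup_le hB₁ ((Submodule.span_singleton_le_iff_mem _ _).2 h₁₂)) h₁
  have hle := Submodule.finrank_mono (sup_le (sup_le hBT
    ((Submodule.span_singleton_le_iff_mem _ _).2 hu₂))
      ((Submodule.span_singleton_le_iff_mem _ _).2 hu₁))
  omega

lemma finrank_le_finrank_Tsq_inf {ε : ℤ} (hε : ε = 1 ∨ ε = -1) [FiniteDimensional k V]
    {P Q : Submodule k V} (hPQ : Disjoint P Q) {S : Submodule k (V ⊗[k] V)}
    (hS : tmulSub P Q ≤ S) (hS' : tmulSub Q P ≤ S) {y : V} (hy : y ∈ Q) (hy0 : y ≠ 0) :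
    Module.finrank k P ≤ Module.finrank k ↥(Tsq k V ε ⊓ S) := by
  let f : P →ₗ[k] ↥(Tsq k V ε ⊓ S) := LinearMap.codRestrict _
    (((TensorProduct.mk k V V).flip y + (ε : k) • TensorProduct.mk k V V y) ∘ₗ P.subtype)
    fun x => ⟨tmul_add_smul_tmul_mem_Tsq hε (x : V) y, add_mem (hS (tmul_mem_tmulSub x.2 hy))
      (Submodule.smul_mem _ _ (hS' (tmul_mem_tmulSub hy x.2)))⟩
  refine LinearMap.finrank_le_finrank_of_injective (f := f)
    ((injective_iff_map_eq_zero f).2 fun x hx => ?_)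
  by_contra hx0
  exact tmul_add_smul_tmul_ne_zero (linearIndependent_pair_of_disjoint hPQ x.2 hy
    (fun h => hx0 (Subtype.ext h)) hy0) (ε : k) (congrArg Subtype.val hx)

variable [Monoid G] [FiniteDimensional k V] {σ : Representation k G V} {ι : Type*} [Fintype ι]
  {X : ι → Submodule k V} {Y Z W₁ W₂ : Submodule k V} {ε : ℤ}

namespace IsIrredDecomposition

lemma finrank_add_two_le (hX : IsIrredDecomposition σ X) (hYZ : ¬ SubrepIso σ Y Z)
    {u₁ u₂ : V ⊗[k] V} (hu₁ : u₁ ∈ Tsq k V ε)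
    (hu₁' : u₁ ∈ tmulSub (isotypic σ X Y) (isotypic σ X Y)) (hu₂ : u₂ ∈ Tsq k V ε)
    (hu₂' : u₂ ∈ tmulSub (isotypic σ X Z) (isotypic σ X Z)) (h₁ : u₁ ≠ 0) (h₂ : u₂ ≠ 0) :
    Module.finrank k ↥(Tsq k V ε ⊓ mixedPart σ) + 2 ≤ Module.finrank k (Tsq k V ε) :=
  SmallRep.finrank_add_two_le inf_le_left hu₁ hu₂ (inf_le_right.trans (hX.mixedPart_le_ker Y))
    (inf_le_right.trans (hX.mixedPart_le_ker Z)) (by rwa [hX.map_isotypicProj_of_mem hu₁'])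
    (hX.map_isotypicProj_of_mem_compl (isotypic_le_isotypicCompl fun h => hYZ h.symm) hu₂')
    (by rwa [hX.map_isotypicProj_of_mem hu₂'])

lemma finrank_eq_two_and_finrank_isotypic_le_one (hX : IsIrredDecomposition σ X)
    (hε : ε = 1 ∨ ε = -1)
    (hW₁ : IsIrredSubrep σ W₁) (hW₂ : IsIrredSubrep σ W₂) (h12 : ¬ SubrepIso σ W₁ W₂)
    (hB : Module.finrank k ↥(Tsq k V ε ⊓ mixedPart σ) ≤ 1) :
    Module.finrank k V = 2 ∧ ∀ Y, IsIrredSubrep σ Y → Module.finrank k (isotypic σ X Y) ≤ 1 := by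
  have hE : W₁ ≤ isotypic σ X W₁ := hX.le_isotypic hW₁
  have hN : W₂ ≤ isotypicCompl σ X W₁ := hX.le_isotypicCompl hW₂ fun h => h12 h.symm
  obtain ⟨w₁, hw₁, hw₁0⟩ := Submodule.exists_mem_ne_zero_of_ne_bot hW₁.ne_bot
  obtain ⟨w₂, hw₂, hw₂0⟩ := Submodule.exists_mem_ne_zero_of_ne_bot hW₂.ne_bot
  have hcompl := hX.isCompl_isotypic W₁
  obtain ⟨hEN, hNE⟩ := hX.tmulSub_isotypic_le_mixedPart W₁
  have hNle :=
    (finrank_le_finrank_Tsq_inf hε hcompl.disjoint.symm hNE hEN (hE hw₁) hw₁0).trans hB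
  have hEle := (finrank_le_finrank_Tsq_inf hε hcompl.disjoint hEN hNE (hN hw₂) hw₂0).trans hB
  have hE1 := Submodule.one_le_finrank_iff.2 (ne_bot_of_le_ne_bot hW₁.ne_bot hE)
  have hN1 := Submodule.one_le_finrank_iff.2 (ne_bot_of_le_ne_bot hW₂.ne_bot hN)
  refine ⟨by have := Submodule.finrank_add_eq_of_isCompl hcompl; omega, fun Y hY => ?_⟩
  by_cases h : SubrepIso σ Y W₁
  · rwa [isotypic_congr h]
  · exact (Submodule.finrank_mono (isotypic_le_isotypicCompl h)).trans hNle

lemma finrank_eq_one (hX : IsIrredDecomposition σ X)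
    (hiso : ∀ Y, IsIrredSubrep σ Y → Module.finrank k (isotypic σ X Y) ≤ 1)
    (hY : IsIrredSubrep σ Y) : Module.finrank k Y = 1 :=
  le_antisymm ((Submodule.finrank_mono (hX.le_isotypic hY)).trans (hiso Y hY))
    (Submodule.one_le_finrank_iff.2 hY.ne_bot)

end IsIrredDecomposition

end Dimension

section Conjugation

variable [CommRing k] [Group G] [AddCommGroup V] [Module k V] (ρ : Representation k G V)
  {H : Subgroup G} {Y Z : Submodule k V}

lemma map_rho_map_rho (g g' : G) (Y : Submodule k V) :
    (Y.map (ρ g')).map (ρ g) = Y.map (ρ (g * g')) := by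
  rw [← Submodule.map_comp, map_mul, Module.End.mul_eq_comp]

lemma map_rho_inv_map_rho (g : G) (Y : Submodule k V) : (Y.map (ρ g)).map (ρ g⁻¹) = Y := by
  rw [map_rho_map_rho, inv_mul_cancel, map_one, Module.End.one_eq_id, Submodule.map_id]

lemma rho_conj_apply (g h : G) (v : V) : ρ g (ρ (g⁻¹ * h * g) v) = ρ h (ρ g v) := by
  simp only [← Module.End.mul_apply, ← map_mul]
  congr 2
  group

variable {ρ}

lemma IsSubrep.map_rho (hH : H.Normal) (hY : IsSubrep (ρ.comp H.subtype) Y) (g : G) :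
    IsSubrep (ρ.comp H.subtype) (Y.map (ρ g)) := by
  rintro h _ ⟨y, hy, rfl⟩
  exact ⟨_, hY ⟨_, hH.conj_mem' _ h.2 g⟩ y hy, rho_conj_apply ρ g h y⟩

lemma IsIrredSubrep.map_rho (hH : H.Normal) (hY : IsIrredSubrep (ρ.comp H.subtype) Y) (g : G) :
    IsIrredSubrep (ρ.comp H.subtype) (Y.map (ρ g)) := by
  refine ⟨hY.1.map_rho hH g, fun h => hY.ne_bot ?_, fun U hU hUs => ?_⟩
  · rw [← map_rho_inv_map_rho ρ g Y, h, Submodule.map_bot]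
  · have hle : U.map (ρ g⁻¹) ≤ Y := by
      simpa only [map_rho_inv_map_rho] using Submodule.map_mono (f := ρ g⁻¹) hU
    rw [← map_rho_inv_map_rho ρ g⁻¹ U, inv_inv]
    rcases hY.2.2 _ hle (hUs.map_rho hH g⁻¹) with h | h <;> simp [h]

lemma SubrepIso.map_rho (hH : H.Normal) (hYZ : SubrepIso (ρ.comp H.subtype) Y Z) (g : G) :
    SubrepIso (ρ.comp H.subtype) (Y.map (ρ g)) (Z.map (ρ g)) := by
  obtain ⟨hY, hZ, e, he⟩ := hYZ
  have hinj : Function.Injective (ρ g) := fun a b hab => by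
    simpa using congrArg (ρ g⁻¹) hab
  have hconj : ∀ (W : Submodule k V) (hW : IsSubrep (ρ.comp H.subtype) W) (h : H) (w : W),
      subRep _ _ (hW.map_rho hH g) h (W.equivMapOfInjective (ρ g) hinj w) =
        W.equivMapOfInjective (ρ g) hinj (subRep _ W hW ⟨_, hH.conj_mem' _ h.2 g⟩ w) :=
    fun W hW h w => Subtype.ext (rho_conj_apply ρ g h w).symm
  refine ⟨hY.map_rho hH g, hZ.map_rho hH g,
    ((Y.equivMapOfInjective (ρ g) hinj).symm.trans e).trans (Z.equivMapOfInjective (ρ g) hinj),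
    fun h w => ?_⟩
  obtain ⟨y, rfl⟩ := (Y.equivMapOfInjective (ρ g) hinj).surjective w
  simp only [LinearEquiv.trans_apply, LinearEquiv.symm_apply_apply]
  rw [hconj Y hY, LinearEquiv.symm_apply_apply, he]
  exact (hconj Z hZ h (e y)).symm

lemma subrepIso_map_rho_iff (hH : H.Normal) (g : G) :
    SubrepIso (ρ.comp H.subtype) (Y.map (ρ g)) (Z.map (ρ g)) ↔
      SubrepIso (ρ.comp H.subtype) Y Z :=
  ⟨fun h => by simpa only [map_rho_inv_map_rho] using h.map_rho hH g⁻¹, fun h => h.map_rho hH g⟩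

end Conjugation

section NormalSubgroup

variable [CommRing k] [Group G] [AddCommGroup V] [Module k V] {ρ : Representation k G V}
  {H : Subgroup G} {Y Z : Submodule k V}

lemma iSup_map_rho_eq_top (hirr : IsIrred ρ) (hY : Y ≠ ⊥) : ⨆ g, Y.map (ρ g) = ⊤ := by
  refine (hirr.2 _ fun g => ?_).resolve_left fun h => hY ?_
  · exact iSup_le fun g' => Submodule.map_le_iff_le_comap.1
      ((map_rho_map_rho ρ g g' Y).le.trans (le_iSup (fun g => Y.map (ρ g)) (g * g')))
  · rw [eq_bot_iff, ← h]
    exact le_iSup_of_le 1 (by rw [map_one, Module.End.one_eq_id, Submodule.map_id])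

/-- Clifford's theorem. -/
lemma exists_isIrredDecomposition_map_rho [Module.Finite k V] (hirr : IsIrred ρ) (hH : H.Normal)
    (hY : IsIrredSubrep (ρ.comp H.subtype) Y) :
    ∃ t : Finset G, IsIrredDecomposition (ρ.comp H.subtype) (fun g : t => Y.map (ρ g)) := by
  classical
  set f : G → Submodule k V := fun g => Y.map (ρ g)
  have htop : IsCompactElement (⊤ : Submodule k V) :=
    (Submodule.fg_iff_compact ⊤).1 Module.Finite.fg_top
  obtain ⟨s, hs⟩ := CompleteLattice.IsCompactElement.exists_finset_of_le_iSup _ htop f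
    (iSup_map_rho_eq_top hirr hY.ne_bot).ge
  obtain ⟨t, -, ht, hts⟩ := exists_supIndep_subset_sup_eq (f := f) (fun g t =>
    (hY.map_rho hH g).disjoint_or_le (by
      rw [Finset.sup_eq_iSup]
      exact isSubrep_iSup fun g => isSubrep_iSup fun _ => (hY.map_rho hH g).1)) s
  refine ⟨t, fun g => hY.map_rho hH g, ht.independent, top_le_iff.1 ?_⟩
  show ⊤ ≤ ⨆ g : t, f g
  rwa [← iSup_subtype' (p := (· ∈ t)) (f := fun g _ => f g), ← Finset.sup_eq_iSup, hts,
    Finset.sup_eq_iSup]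

lemma exists_map_rho_subrepIso [Module.Finite k V] (hirr : IsIrred ρ) (hH : H.Normal)
    (hY : IsIrredSubrep (ρ.comp H.subtype) Y) (hZ : IsIrredSubrep (ρ.comp H.subtype) Z) :
    ∃ g : G, SubrepIso (ρ.comp H.subtype) (Y.map (ρ g)) Z := by
  obtain ⟨t, hX⟩ := exists_isIrredDecomposition_map_rho hirr hH hY
  by_contra! h
  exact hZ.ne_bot (eq_bot_iff.2 ((hX.le_isotypic hZ).trans (iSup₂_le fun i hi => (h i hi).elim)))

lemma isSubrep_mixedPart (hH : H.Normal) : IsSubrep (ρ.tprod ρ) (mixedPart (ρ.comp H.subtype)) :=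
  fun g => (iSup₂_le fun Y Z => iSup_le fun ⟨hY, hZ, hYZ⟩ => tmulSub_le_iff.2 fun y hy z hz => by
    simpa [Representation.tprod_apply] using tmulSub_le_mixedPart (hY.map_rho hH g)
      (hZ.map_rho hH g) ((subrepIso_map_rho_iff hH g).not.2 hYZ)
      (tmul_mem_tmulSub (Submodule.mem_map_of_mem hy) (Submodule.mem_map_of_mem hz)) :
    mixedPart _ ≤ (mixedPart _).comap (ρ.tprod ρ g))

variable {ι : Type*} [Fintype ι] {X : ι → Submodule k V}

lemma IsIrredDecomposition.map_rho_isotypic_le (hX : IsIrredDecomposition (ρ.comp H.subtype) X)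
    (hH : H.Normal) (g : G) (Y : Submodule k V) :
    (isotypic (ρ.comp H.subtype) X Y).map (ρ g) ≤ isotypic (ρ.comp H.subtype) X (Y.map (ρ g)) := by
  simp only [isotypic, Submodule.map_iSup]
  exact iSup₂_le fun i hi => (hX.le_isotypic ((hX.isIrredSubrep i).map_rho hH g)).trans
    (isotypic_congr (hi.map_rho hH g)).le

end NormalSubgroup

section Conclusion

variable [Field k] [Group G] [AddCommGroup V] [Module k V] [FiniteDimensional k V]
  {ρ : Representation k G V} {H : Subgroup G} {ι : Type*} [Fintype ι] {X : ι → Submodule k V}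
  {W₁ W₂ : Submodule k V} {ε : ℤ}

namespace IsIrredDecomposition

lemma eq_neg_one_and_finrank_isotypic_le_one (hX : IsIrredDecomposition (ρ.comp H.subtype) X)
    (hirr : IsIrred ρ) (hH : H.Normal) (hε : ε = 1 ∨ ε = -1)
    (hW₁ : IsIrredSubrep (ρ.comp H.subtype) W₁) (hW₂ : IsIrredSubrep (ρ.comp H.subtype) W₂)
    (h12 : ¬ SubrepIso (ρ.comp H.subtype) W₁ W₂)
    (hB : Module.finrank k (Tsq k V ε) ≤
      Module.finrank k ↥(Tsq k V ε ⊓ mixedPart (ρ.comp H.subtype)) + 1) :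
    ε = -1 ∧ ∀ Y, IsIrredSubrep (ρ.comp H.subtype) Y →
      Module.finrank k (isotypic (ρ.comp H.subtype) X Y) ≤ 1 := by
  refine ⟨hε.resolve_left fun hε1 => ?_, fun Y hY => not_lt.1 fun hlt => ?_⟩
  · subst hε1
    obtain ⟨w₁, hw₁, hw₁0⟩ := Submodule.exists_mem_ne_zero_of_ne_bot hW₁.ne_bot
    obtain ⟨w₂, hw₂, hw₂0⟩ := Submodule.exists_mem_ne_zero_of_ne_bot hW₂.ne_bot
    have := hX.finrank_add_two_le h12 (tmul_self_mem_Tsq_one w₁)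
      (tmul_mem_tmulSub (hX.le_isotypic hW₁ hw₁) (hX.le_isotypic hW₁ hw₁))
      (tmul_self_mem_Tsq_one w₂)
      (tmul_mem_tmulSub (hX.le_isotypic hW₂ hw₂) (hX.le_isotypic hW₂ hw₂))
      (tmul_ne_zero hw₁0 hw₁0) (tmul_ne_zero hw₂0 hw₂0)
    omega
  obtain ⟨Z, hZ, hYZ⟩ : ∃ Z, IsIrredSubrep (ρ.comp H.subtype) Z ∧ ¬ SubrepIso _ Y Z := by
    by_cases h : SubrepIso (ρ.comp H.subtype) Y W₁
    · exact ⟨W₂, hW₂, fun h' => h12 (h.symm.trans h')⟩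
    · exact ⟨W₁, hW₁, h⟩
  obtain ⟨g, hg⟩ := exists_map_rho_subrepIso hirr hH hY hZ
  obtain ⟨x, hx, y, hy, hxy⟩ := exists_linearIndependent_pair_mem hlt
  set u := x ⊗ₜ[k] y + (ε : k) • y ⊗ₜ[k] x
  have hu : u ∈ tmulSub (isotypic _ X Y) (isotypic _ X Y) :=
    add_mem (tmul_mem_tmulSub hx hy) (Submodule.smul_mem _ _ (tmul_mem_tmulSub hy hx))
  have := hX.finrank_add_two_le (fun h => hYZ (h.trans hg)) (tmul_add_smul_tmul_mem_Tsq hε x y)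
    hu (isSubrep_Tsq ρ ε g u (tmul_add_smul_tmul_mem_Tsq hε x y))
    (Submodule.map₂_le_map₂ (hX.map_rho_isotypic_le hH g Y) (hX.map_rho_isotypic_le hH g Y)
      (tprod_mem_tmulSub_map ρ g hu))
    (tmul_add_smul_tmul_ne_zero hxy _) fun h => tmul_add_smul_tmul_ne_zero hxy (ε : k)
      (by simpa only [Representation.inv_self_apply, map_zero] using congrArg (ρ.tprod ρ g⁻¹) h)
  omega

lemma finrank_weightSpace_le_one (hX : IsIrredDecomposition (ρ.comp H.subtype) X)
    (hiso : ∀ Y, IsIrredSubrep (ρ.comp H.subtype) Y →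
      Module.finrank k (isotypic (ρ.comp H.subtype) X Y) ≤ 1) (χ : H →* kˣ) :
    Module.finrank k (weightSpace ρ H χ) ≤ 1 := by
  by_cases h : weightSpace ρ H χ = ⊥
  · rw [h, finrank_bot]
    exact zero_le_one
  obtain ⟨v, hv, hv0⟩ := Submodule.exists_mem_ne_zero_of_ne_bot h
  replace hv : ∀ h : H, ρ.comp H.subtype h v = (χ h : k) • v := hv
  refine (Submodule.finrank_mono fun w hw => ?_).trans
    (hiso _ (isIrredSubrep_span_singleton hv0 hv))
  replace hw : ∀ h : H, ρ.comp H.subtype h w = (χ h : k) • w := hw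
  by_cases hw0 : w = 0
  · rw [hw0]
    exact zero_mem _
  · rw [← isotypic_congr (subrepIso_span_singleton hw0 hv0 hw hv)]
    exact hX.le_isotypic (isIrredSubrep_span_singleton hw0 hw) (Submodule.mem_span_singleton_self w)

end IsIrredDecomposition

end Conclusion

theorem small_rep_non_isotypic_general
    (k G V : Type*) [Field k] [Group G]
    [AddCommGroup V] [Module k V] [FiniteDimensional k V]
    (ρ : Representation k G V) (ε : ℤ) (hε : ε = 1 ∨ ε = -1)
    (hirr : IsIrred ρ) (hsmall : IsSmall ρ ε)
    (H : Subgroup G) (hH : H.Normal)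
    (W₁ W₂ : Submodule k V)
    (hW₁ : IsSubrep (ρ.comp H.subtype) W₁) (hW₂ : IsSubrep (ρ.comp H.subtype) W₂)
    (hW₁irr : SubIrred (ρ.comp H.subtype) W₁) (hW₂irr : SubIrred (ρ.comp H.subtype) W₂)
    (hnoniso : ¬ RepIso (subRep (ρ.comp H.subtype) W₁ hW₁) (subRep (ρ.comp H.subtype) W₂ hW₂)) :
    (∀ W : Submodule k V, IsSubrep (ρ.comp H.subtype) W → SubIrred (ρ.comp H.subtype) W →
      Module.finrank k W = 1) ∧
    (∀ χ : H →* kˣ, Module.finrank k (weightSpace ρ H χ) ≤ 1) ∧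
    (ε = -1 ∨ Module.finrank k V = 2) := by
  have h12 : ¬ SubrepIso (ρ.comp H.subtype) W₁ W₂ := fun ⟨_, _, h⟩ => hnoniso h
  obtain ⟨t, hX⟩ := exists_isIrredDecomposition_map_rho hirr hH ⟨hW₁, hW₁irr⟩
  have key : (ε = -1 ∨ Module.finrank k V = 2) ∧ ∀ Y, IsIrredSubrep (ρ.comp H.subtype) Y →
      Module.finrank k (isotypic (ρ.comp H.subtype) (fun g : t => W₁.map (ρ g)) Y) ≤ 1 := by
    rcases hsmall.finrank_le_one_or ((isSubrep_Tsq ρ ε).inf (isSubrep_mixedPart hH)) inf_le_left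
      with hB | hB
    · obtain ⟨h2, hiso⟩ := hX.finrank_eq_two_and_finrank_isotypic_le_one hε ⟨hW₁, hW₁irr⟩
        ⟨hW₂, hW₂irr⟩ h12 hB
      exact ⟨Or.inr h2, hiso⟩
    · obtain ⟨h2, hiso⟩ := hX.eq_neg_one_and_finrank_isotypic_le_one hirr hH hε ⟨hW₁, hW₁irr⟩
        ⟨hW₂, hW₂irr⟩ h12 hB
      exact ⟨Or.inl h2, hiso⟩
  exact ⟨fun W hW hWirr => hX.finrank_eq_one key.2 ⟨hW, hWirr⟩,
    hX.finrank_weightSpace_le_one key.2, key.1⟩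

/-- If a faithful irreducible `ε`-small representation `V` of a finite group contains two
non-isomorphic irreducible `H`-submodules for a normal subgroup `H`, then all irreducible
`H`-submodules of `V` are one-dimensional, each character of `H` occurs with multiplicity
at most one, and `ε = -1` or `dim V = 2`. -/
theorem small_rep_non_isotypic
    (k G V : Type*) [Field k] [IsAlgClosed k] [CharZero k] [Group G] [Finite G]
    [AddCommGroup V] [Module k V] [FiniteDimensional k V]
    (ρ : Representation k G V) (ε : ℤ) (hε : ε = 1 ∨ ε = -1)
    (hirr : IsIrred ρ) (hsmall : IsSmall ρ ε)
    (H : Subgroup G) (hH : H.Normal)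
    (W₁ W₂ : Submodule k V)
    (hW₁ : IsSubrep (ρ.comp H.subtype) W₁) (hW₂ : IsSubrep (ρ.comp H.subtype) W₂)
    (hW₁irr : SubIrred (ρ.comp H.subtype) W₁) (hW₂irr : SubIrred (ρ.comp H.subtype) W₂)
    (hnoniso : ¬ RepIso (subRep (ρ.comp H.subtype) W₁ hW₁) (subRep (ρ.comp H.subtype) W₂ hW₂)) :
    (∀ W : Submodule k V, IsSubrep (ρ.comp H.subtype) W → SubIrred (ρ.comp H.subtype) W →
      Module.finrank k W = 1) ∧
    (∀ χ : H →* kˣ, Module.finrank k (weightSpace ρ H χ) ≤ 1) ∧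
    (ε = -1 ∨ Module.finrank k V = 2) :=
  small_rep_non_isotypic_general k G V ρ ε hε hirr hsmall H hH W₁ W₂ hW₁ hW₂ hW₁irr hW₂irr hnoniso


end SmallRep
end

section
/- Let M be a group, C a subgroup of the center Z(M), and E a subgroup of M such that every element of M is a product c · e with c ∈ C and e ∈ E. Set T = C ∩ E. Then every automorphism φ of E which fixes T pointwise extends uniquely to an automorphism ψ of M which fixes C pointwise and satisfies ψ(e) = φ(e) for all e ∈ E. -/
namespace SmallRep

/-- Let `M` be a group, `C` a central subgroup and `E` a subgroup with `M = C·E`, and set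
`T = C ⊓ E`. Every automorphism of `E` fixing `T` pointwise extends uniquely to an
automorphism of `M` fixing `C` pointwise. -/
theorem existsUnique_extension_of_automorphism
    (M : Type*) [Group M] (C E : Subgroup M) (hC : C ≤ Subgroup.center M)
    (hgen : ∀ m : M, ∃ c ∈ C, ∃ e ∈ E, m = c * e)
    (φ : E ≃* E) (hφ : ∀ x : E, (x : M) ∈ C ⊓ E → φ x = x) :
    ∃! ψ : M ≃* M, (∀ c ∈ C, ψ c = c) ∧ ∀ e : E, ψ e = (φ e : M) := by
  classical
  have hcomm : ∀ c ∈ C, ∀ m : M, c * m = m * c := by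
    intro c hc m
    exact ((Subgroup.mem_center_iff.mp (hC hc)) m).symm
  -- key well-definedness lemma, for a general ρ fixing T pointwise
  have key : ∀ (ρ : E ≃* E), (∀ x : E, (x : M) ∈ C ⊓ E → ρ x = x) →
      ∀ c ∈ C, ∀ e : E, ∀ c' ∈ C, ∀ e' : E, c * e = c' * e' →
        c * (ρ e : M) = c' * (ρ e' : M) := by
    intro ρ hρ c hc e c' hc' e' heq
    have h1 : c'⁻¹ * c = (e' : M) * (e : M)⁻¹ := by
      calc c'⁻¹ * c = c'⁻¹ * (c * e) * (e : M)⁻¹ := by group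
        _ = c'⁻¹ * (c' * e') * (e : M)⁻¹ := by rw [heq]
        _ = (e' : M) * (e : M)⁻¹ := by group
    have hmem : ((e' * e⁻¹ : E) : M) ∈ C ⊓ E := by
      constructor
      · show ((e' * e⁻¹ : E) : M) ∈ C
        have : ((e' * e⁻¹ : E) : M) = c'⁻¹ * c := by push_cast; rw [h1]
        rw [this]; exact mul_mem (inv_mem hc') hc
      · exact (e' * e⁻¹ : E).2
    have h2 := hρ _ hmem
    have h3 : (ρ e' : M) * (ρ e : M)⁻¹ = (e' : M) * (e : M)⁻¹ := by
      have := congrArg (fun x : E => (x : M)) h2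
      push_cast at this
      simpa using this
    calc c * (ρ e : M) = c' * (c'⁻¹ * c) * (ρ e : M) := by group
      _ = c' * ((e' : M) * (e : M)⁻¹) * (ρ e : M) := by rw [h1]
      _ = c' * ((ρ e' : M) * (ρ e : M)⁻¹) * (ρ e : M) := by rw [h3]
      _ = c' * (ρ e' : M) := by group
  choose cc hcc ee hee hfac using hgen
  -- the candidate map built from ρ
  set F : (E ≃* E) → M → M := fun ρ m => cc m * (ρ ⟨ee m, hee m⟩ : M) with hF
  have Fspec : ∀ (ρ : E ≃* E), (∀ x : E, (x : M) ∈ C ⊓ E → ρ x = x) →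
      ∀ c ∈ C, ∀ e : E, F ρ (c * e) = c * (ρ e : M) := by
    intro ρ hρ c hc e
    exact key ρ hρ (cc (c * e)) (hcc _) ⟨ee (c * e), hee _⟩ c hc e (hfac (c * e)).symm
  have hφs : ∀ x : E, (x : M) ∈ C ⊓ E → φ.symm x = x := by
    intro x hx
    conv_lhs => rw [← hφ x hx]
    exact φ.symm_apply_apply x
  -- F φ.symm is a left and right inverse of F φ
  have hinv : ∀ (ρ σ : E ≃* E), (∀ x : E, (x : M) ∈ C ⊓ E → σ x = x) →
      (∀ x : E, σ (ρ x) = x) → ∀ m, F σ (F ρ m) = m := by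
    intro ρ σ hσ hσρ m
    have : F ρ m = cc m * ((ρ ⟨ee m, hee m⟩ : E) : M) := rfl
    rw [this, Fspec σ hσ (cc m) (hcc m) (ρ ⟨ee m, hee m⟩), hσρ]
    exact (hfac m).symm
  have hmul : ∀ m₁ m₂ : M, F φ (m₁ * m₂) = F φ m₁ * F φ m₂ := by
    intro m₁ m₂
    have h1 : m₁ * m₂ = (cc m₁ * cc m₂) * ((⟨ee m₁, hee m₁⟩ * ⟨ee m₂, hee m₂⟩ : E) : M) := by
      push_cast
      conv_lhs => rw [hfac m₁, hfac m₂]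
      calc cc m₁ * ee m₁ * (cc m₂ * ee m₂) = cc m₁ * (ee m₁ * cc m₂) * ee m₂ := by group
        _ = cc m₁ * (cc m₂ * ee m₁) * ee m₂ := by rw [← hcomm (cc m₂) (hcc m₂) (ee m₁)]
        _ = cc m₁ * cc m₂ * (ee m₁ * ee m₂) := by group
    have h2 : F φ m₁ * F φ m₂ = (cc m₁ * cc m₂) *
        ((φ ⟨ee m₁, hee m₁⟩ : M) * (φ ⟨ee m₂, hee m₂⟩ : M)) := by
      simp only [hF]
      calc cc m₁ * (φ ⟨ee m₁, hee m₁⟩ : M) * (cc m₂ * (φ ⟨ee m₂, hee m₂⟩ : M))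
          = cc m₁ * ((φ ⟨ee m₁, hee m₁⟩ : M) * cc m₂) * (φ ⟨ee m₂, hee m₂⟩ : M) := by group
        _ = cc m₁ * (cc m₂ * (φ ⟨ee m₁, hee m₁⟩ : M)) * (φ ⟨ee m₂, hee m₂⟩ : M) := by
            rw [← hcomm (cc m₂) (hcc m₂) ((φ ⟨ee m₁, hee m₁⟩ : M))]
        _ = cc m₁ * cc m₂ * ((φ ⟨ee m₁, hee m₁⟩ : M) * (φ ⟨ee m₂, hee m₂⟩ : M)) := by group
    rw [h1, Fspec φ hφ _ (mul_mem (hcc m₁) (hcc m₂)), map_mul, h2]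
    push_cast
    ring_nf
  refine ⟨{ toFun := F φ, invFun := F φ.symm,
            left_inv := hinv φ φ.symm hφs (fun x => φ.symm_apply_apply x),
            right_inv := hinv φ.symm φ hφ (fun x => φ.apply_symm_apply x),
            map_mul' := hmul }, ⟨?_, ?_⟩, ?_⟩
  · intro c hc
    simpa using Fspec φ hφ c hc 1
  · intro e
    simpa using Fspec φ hφ 1 (one_mem C) e
  · intro ψ' ⟨h1, h2⟩
    ext m
    show ψ' m = F φ m
    rw [hfac m]
    rw [map_mul, h1 _ (hcc m), h2 ⟨ee m, hee m⟩]
    exact (Fspec φ hφ (cc m) (hcc m) ⟨ee m, hee m⟩).symm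

end SmallRep
end

section
/- Let k be a field, V a finite-dimensional k-vector space with n = dim_k V, and f, g ∈ End_k(V). Let D_f and D_g be endomorphisms of the exterior square ⋀²V satisfying D_f(x ∧ y) = f(x) ∧ y + x ∧ f(y) and D_g(x ∧ y) = g(x) ∧ y + x ∧ g(y) for all x, y ∈ V. Then tr(D_f ∘ D_g) = (n − 2)·tr(f ∘ g) + tr(f)·tr(g). -/
/-!
Let `A`, `B` be the matrices of `f`, `g` in a basis `b` of `V`, and use the basis `bᵢ ∧ bⱼ`
(`i < j`) of `⋀²V`. Expanding `D_f (D_g (bᵢ ∧ bⱼ))` into four wedges shows that its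
`bᵢ ∧ bⱼ`-coordinate is `h i j + h j i` with `h i j = (AB)ᵢᵢ + Aⱼⱼ Bᵢᵢ - Aᵢⱼ Bⱼᵢ`. Summing over
`i < j` is summing `h` over all `i ≠ j`, and the three terms contribute `(n - 1) tr(fg)`,
`tr f tr g - ∑ᵢ Aᵢᵢ Bᵢᵢ` and `-(tr(fg) - ∑ᵢ Aᵢᵢ Bᵢᵢ)`.
-/

namespace SmallRep

/-- The elementary wedge `x ∧ y` as an element of the exterior square `⋀[k]^2 V`. -/
noncomputable def wedge (k : Type*) {V : Type*} [CommRing k] [AddCommGroup V] [Module k V]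
    (x y : V) : ⋀[k]^2 V :=
  ⟨ExteriorAlgebra.ιMulti k 2 ![x, y],
    ExteriorAlgebra.ιMulti_range k 2 (Set.mem_range_self _)⟩

end SmallRep

open Module Finset Set.powersetCard SmallRep

theorem Fintype.sum_lt_pairs_add_swap {I M : Type*} [Fintype I] [LinearOrder I]
    [AddCommGroup M] (h : I → I → M) :
    ∑ p : {p : I × I // p.1 < p.2}, (h p.1.1 p.1.2 + h p.1.2 p.1.1) =
      ∑ i, ∑ j, h i j - ∑ i, h i i := by
  have sum_lt (F : I → I → M) :
      ∑ p : {p : I × I // p.1 < p.2}, F p.1.1 p.1.2 = ∑ i, ∑ j, if i < j then F i j else 0 := by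
    rw [← sum_subtype {p : I × I | p.1 < p.2} (p := fun p : I × I => p.1 < p.2) (by simp)
      (fun p => F p.1 p.2), sum_filter, Fintype.sum_prod_type]
  have trichotomy (i j : I) : (if i < j then h i j else 0) + (if j < i then h i j else 0) +
      (if i = j then h i j else 0) = h i j := by
    rcases lt_trichotomy i j with hij | rfl | hij
    · simp [hij, hij.ne, hij.not_gt]
    · simp
    · simp [hij, hij.ne', hij.not_gt]
  rw [sum_add_distrib, sum_lt h, sum_lt fun i j => h j i, sum_comm (γ := I)
    (f := fun i j => if i < j then h j i else 0), eq_sub_iff_add_eq, ← sum_add_distrib,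
    ← sum_add_distrib]
  refine Finset.sum_congr rfl fun i _ => ?_
  rw [← Fintype.sum_ite_eq i (h i), ← sum_add_distrib, ← sum_add_distrib]
  exact Finset.sum_congr rfl fun j _ => trichotomy i j

theorem Matrix.sum_sum_sub_sum_diag_eq_trace {n R : Type*} [Fintype n] [CommRing R]
    (A B : Matrix n n R) :
    ∑ i, ∑ j, ((A * B) i i + A j j * B i i - A i j * B j i) -
        ∑ i, ((A * B) i i + A i i * B i i - A i i * B i i) =
      ((Fintype.card n : R) - 2) * (A * B).trace + A.trace * B.trace := by
  simp only [Matrix.trace, Matrix.diag_apply, Matrix.mul_apply, sum_sub_distrib, sum_add_distrib,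
    sum_const, card_univ, nsmul_eq_mul, ← sum_mul, ← mul_sum]
  ring

theorem LinearMap.trace_eq_sum_repr {ι R M : Type*} [Fintype ι] [CommRing R] [AddCommGroup M]
    [Module R M] (b : Basis ι R M) (f : M →ₗ[R] M) :
    LinearMap.trace R M f = ∑ i, b.repr (f (b i)) i := by
  classical
  simp only [LinearMap.trace_eq_matrix_trace R b, Matrix.trace, Matrix.diag_apply,
    LinearMap.toMatrix_apply]

section ExteriorSquareBasis

variable {I : Type*} [LinearOrder I]

def OrderEmbedding.finTwoEquiv : (Fin 2 ↪o I) ≃ {p : I × I // p.1 < p.2} where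
  toFun e := ⟨(e 0, e 1), e.lt_iff_lt.2 Fin.zero_lt_one⟩
  invFun p := OrderEmbedding.ofStrictMono ![p.1.1, p.1.2] (Fin.strictMono_iff_lt_succ.2 <| by
    intro i; fin_cases i; exact p.2)
  left_inv e := by ext i; fin_cases i <;> rfl
  right_inv p := rfl

theorem OrderEmbedding.coe_finTwoEquiv_symm (p : {p : I × I // p.1 < p.2}) :
    ⇑(OrderEmbedding.finTwoEquiv.symm p) = ![p.1.1, p.1.2] := rfl

variable {R M : Type*} [CommRing R] [AddCommGroup M] [Module R M]

noncomputable def Module.Basis.exteriorSquare (b : Basis I R M) :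
    Basis {p : I × I // p.1 < p.2} R (⋀[R]^2 M) :=
  (b.exteriorPower 2).reindex (ofFinEmbEquiv.symm.trans OrderEmbedding.finTwoEquiv)

theorem Module.Basis.exteriorSquare_apply (b : Basis I R M) (p : {p : I × I // p.1 < p.2}) :
    b.exteriorSquare p = wedge R (b p.1.1) (b p.1.2) := by
  rw [Basis.exteriorSquare, Basis.reindex_apply, exteriorPower.basis_apply,
    exteriorPower.ιMulti_family, Equiv.symm_trans_apply, Equiv.symm_symm, Equiv.symm_apply_apply,
    OrderEmbedding.coe_finTwoEquiv_symm, ← FinVec.map_eq]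
  rfl

theorem Module.Basis.exteriorSquare_repr_wedge (b : Basis I R M) (x y : M)
    (p : {p : I × I // p.1 < p.2}) :
    b.exteriorSquare.repr (wedge R x y) p =
      b.repr x p.1.1 * b.repr y p.1.2 - b.repr x p.1.2 * b.repr y p.1.1 := by
  rw [Basis.exteriorSquare, Basis.repr_reindex_apply, exteriorPower.basis_repr_apply]
  change exteriorPower.ιMultiDual R 2 b _ (exteriorPower.ιMulti R 2 ![x, y]) = _
  rw [exteriorPower.ιMultiDual_apply_ιMulti, Matrix.det_fin_two]
  simp [OrderEmbedding.coe_finTwoEquiv_symm]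

end ExteriorSquareBasis

namespace SmallRep

section

variable {R M : Type*} [CommRing R] [AddCommGroup M] [Module R M]

def IsWedgeDerivation (f : M →ₗ[R] M) (D : Module.End R (⋀[R]^2 M)) : Prop :=
  ∀ x y, D (wedge R x y) = wedge R (f x) y + wedge R x (f y)

namespace IsWedgeDerivation

variable {f g : M →ₗ[R] M} {Df Dg : Module.End R (⋀[R]^2 M)}

theorem apply_apply_wedge (hf : IsWedgeDerivation f Df) (hg : IsWedgeDerivation g Dg)
    (x y : M) :
    Df (Dg (wedge R x y)) = wedge R (f (g x)) y + wedge R (g x) (f y) + wedge R (f x) (g y) +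
      wedge R x (f (g y)) := by
  rw [hg, map_add, hf, hf]
  abel

theorem repr_comp_apply_exteriorSquare {I : Type*} [LinearOrder I] [Fintype I] [DecidableEq I]
    (hf : IsWedgeDerivation f Df) (hg : IsWedgeDerivation g Dg) (b : Basis I R M)
    {A B : Matrix I I R} (hA : LinearMap.toMatrix b b f = A) (hB : LinearMap.toMatrix b b g = B)
    (p : {p : I × I // p.1 < p.2}) :
    b.exteriorSquare.repr ((Df ∘ₗ Dg) (b.exteriorSquare p)) p =
      ((A * B) p.1.1 p.1.1 + A p.1.2 p.1.2 * B p.1.1 p.1.1 - A p.1.1 p.1.2 * B p.1.2 p.1.1) +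
        ((A * B) p.1.2 p.1.2 + A p.1.1 p.1.1 * B p.1.2 p.1.2 - A p.1.2 p.1.1 * B p.1.1 p.1.2) := by
  obtain ⟨⟨i, j⟩, hij⟩ := p
  have hfA (i j : I) : b.repr (f (b j)) i = A i j := hA ▸ (LinearMap.toMatrix_apply b b f i j).symm
  have hgB (i j : I) : b.repr (g (b j)) i = B i j := hB ▸ (LinearMap.toMatrix_apply b b g i j).symm
  have hfgAB (i j : I) : b.repr (f (g (b j))) i = (A * B) i j := by
    rw [← hA, ← hB, ← LinearMap.toMatrix_comp, LinearMap.toMatrix_apply, LinearMap.comp_apply]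
  simp only [LinearMap.comp_apply, Basis.exteriorSquare_apply, hf.apply_apply_wedge hg, map_add,
    Finsupp.add_apply, Basis.exteriorSquare_repr_wedge, hfA, hgB, hfgAB, Basis.repr_self,
    Finsupp.single_apply, if_neg hij.ne, if_neg hij.ne', if_true]
  ring

end IsWedgeDerivation

end

/-- If `D_f` and `D_g` are the derivation-like endomorphisms of `⋀²V` induced by
endomorphisms `f, g` of an `n`-dimensional vector space `V`, then
`tr(D_f ∘ D_g) = (n-2)·tr(f∘g) + tr(f)·tr(g)`. -/
theorem trace_exterior_square_derivation_comp
    (k V : Type*) [Field k] [AddCommGroup V] [Module k V] [FiniteDimensional k V]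
    (f g : V →ₗ[k] V) (Df Dg : Module.End k (⋀[k]^2 V))
    (hDf : ∀ x y : V, Df (wedge k x y) = wedge k (f x) y + wedge k x (f y))
    (hDg : ∀ x y : V, Dg (wedge k x y) = wedge k (g x) y + wedge k x (g y)) :
    LinearMap.trace k (⋀[k]^2 V) (Df ∘ₗ Dg) =
      ((Module.finrank k V : k) - 2) * LinearMap.trace k V (f ∘ₗ g) +
        LinearMap.trace k V f * LinearMap.trace k V g := by
  let b := Module.finBasis k V
  let A := LinearMap.toMatrix b b f
  let B := LinearMap.toMatrix b b g
  rw [LinearMap.trace_eq_sum_repr b.exteriorSquare,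
    Fintype.sum_congr _ _ (IsWedgeDerivation.repr_comp_apply_exteriorSquare hDf hDg b rfl rfl),
    Fintype.sum_lt_pairs_add_swap fun i j => (A * B) i i + A j j * B i i - A i j * B j i,
    Matrix.sum_sum_sub_sum_diag_eq_trace, Fintype.card_fin, ← LinearMap.toMatrix_comp,
    ← LinearMap.trace_eq_matrix_trace, ← LinearMap.trace_eq_matrix_trace,
    ← LinearMap.trace_eq_matrix_trace]

end SmallRep
end

section
/- Let k be an algebraically closed field of characteristic zero, G a finite group, ε ∈ {+1, −1}, and V a faithful irreducible ε-small finite-dimensional representation of G over k. Let H be a normal subgroup of G not contained in the center Z(G) such that all irreducible H-submodules of V are pairwise isomorphic, but the restriction of V to H is not irreducible. Then dim_k V = 4 and there exist a nondegenerate quadratic form q on V and a group homomorphism λ : G → kˣ such that q(g • v) = λ(g) · q(v) for all g ∈ G and v ∈ V. -/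
open TensorProduct

namespace SmallRep

variable {k G V : Type*}

/-!
Since `H` is normal and `V|_H` is isotypic but reducible, `V ≅ W ⊗ U` with `W` an irreducible
`H`-module, `H` acting on the first factor only, and `dim U ≥ 2`. Also `dim W ≥ 2`: otherwise `H`
acts by scalars and, `V` being faithful, is central. Conjugating by `g` permutes the irreducible
`H`-submodules, so by Schur's lemma every `ρ g` is a pure tensor `β ⊗ C`. Hence
`S²V = S²W ⊗ S²U ⊕ Λ²W ⊗ Λ²U` and `Λ²V = S²W ⊗ Λ²U ⊕ Λ²W ⊗ S²U` are sums of `G`-stable pieces.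
In `Λ²V` both pieces have dimension at least `2`, which contradicts smallness. In `S²V` smallness
forces `dim (Λ²W ⊗ Λ²U) = 1`, so `dim W = dim U = 2` and `dim V = 4`; this `G`-stable line of
`S²V` is a symmetric bilinear form preserved up to a character, and it is nondegenerate because
`V` is irreducible.
-/

section Subrepresentations

variable {k Γ V : Type*} [Field k] [Group Γ] [AddCommGroup V] [Module k V]

lemma exists_subIrred_le [FiniteDimensional k V] (σ : Representation k Γ V) {X : Submodule k V}
    (hX : IsSubrep σ X) (hX₀ : X ≠ ⊥) : ∃ W ≤ X, IsSubrep σ W ∧ SubIrred σ W := by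
  obtain ⟨W, ⟨hWX, hW, hW₀⟩, hmin⟩ := wellFounded_lt.has_min
    {W : Submodule k V | W ≤ X ∧ IsSubrep σ W ∧ W ≠ ⊥} ⟨X, le_rfl, hX, hX₀⟩
  refine ⟨W, hWX, hW, hW₀, fun U hUW hU => or_iff_not_imp_left.mpr fun hU₀ => ?_⟩
  by_contra hUW'
  exact hmin U ⟨hUW.trans hWX, hU, hU₀⟩ (lt_of_le_of_ne hUW hUW')

lemma exists_isSubrep_isCompl [Finite Γ] [NeZero (Nat.card Γ : k)] (σ : Representation k Γ V)
    {W : Submodule k V} (hW : IsSubrep σ W) : ∃ Q, IsSubrep σ Q ∧ IsCompl W Q := by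
  let W' : Subrepresentation σ := ⟨W, fun g _ hv => hW g _ hv⟩
  obtain ⟨Q, hQ⟩ := exists_isCompl W'
  refine ⟨Q.toSubmodule, fun g _ hv => Q.apply_mem_toSubmodule g hv, ?_, ?_⟩
  · rw [disjoint_iff, show W = W'.toSubmodule from rfl, ← Subrepresentation.toSubmodule_inf,
      hQ.inf_eq_bot]
    rfl
  · rw [codisjoint_iff, show W = W'.toSubmodule from rfl, ← Subrepresentation.toSubmodule_sup,
      hQ.sup_eq_top]
    rfl

lemma isIrred_subRep {σ : Representation k Γ V} {W : Submodule k V} (hW : IsSubrep σ W)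
    (hirr : SubIrred σ W) : IsIrred (subRep σ W hW) := by
  refine ⟨Submodule.nontrivial_iff_ne_bot.mpr hirr.1, fun Z hZ => ?_⟩
  have hZ' : IsSubrep σ (Z.map W.subtype) := by
    rintro g _ ⟨z, hz, rfl⟩
    exact ⟨_, hZ g z hz, rfl⟩
  rcases hirr.2 _ (Submodule.map_subtype_le W Z) hZ' with h | h
  · exact .inl (Submodule.map_injective_of_injective W.injective_subtype (by simpa using h))
  · exact .inr (Submodule.map_injective_of_injective W.injective_subtype (by simpa using h))

lemma isIrred_of_subIrred_top {σ : Representation k Γ V} (h : SubIrred σ ⊤) : IsIrred σ := by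
  obtain ⟨x, -, hx⟩ := (Submodule.ne_bot_iff _).mp h.1
  exact ⟨nontrivial_of_ne x 0 hx, fun W hW => h.2 W le_top hW⟩

def IsIsotypicOf (σ : Representation k Γ V) (W₀ : Submodule k V) (hW₀ : IsSubrep σ W₀) : Prop :=
  ∀ (W : Submodule k V) (hW : IsSubrep σ W), SubIrred σ W →
    RepIso (subRep σ W₀ hW₀) (subRep σ W hW)

end Subrepresentations

section Isotypic

variable {k Γ V : Type*} [Field k] [Group Γ] [Finite Γ] [NeZero (Nat.card Γ : k)]
  [AddCommGroup V] [Module k V] [FiniteDimensional k V]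
  {σ : Representation k Γ V} {W₀ : Submodule k V} {hW₀ : IsSubrep σ W₀}

lemma exists_pi_linearMap_of_isIsotypicOf (hiso : IsIsotypicOf σ W₀ hW₀) {X : Submodule k V}
    (hX : IsSubrep σ X) :
    ∃ (m : ℕ) (L : (Fin m → W₀) →ₗ[k] V), Function.Injective L ∧ LinearMap.range L = X ∧
      ∀ g f, L (fun i => subRep σ W₀ hW₀ g (f i)) = σ g (L f) := by
  induction hn : Module.finrank k X using Nat.strong_induction_on generalizing X with
  | _ n ih =>
  by_cases hX₀ : X = ⊥
  · exact ⟨0, 0, Function.injective_of_subsingleton _, by rw [LinearMap.range_zero, hX₀],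
      by simp⟩
  obtain ⟨W, hWX, hW, hWirr⟩ := exists_subIrred_le σ hX hX₀
  obtain ⟨Q, hQ, hWQ⟩ := exists_isSubrep_isCompl σ hW
  have hsup : W ⊔ Q ⊓ X = X := by
    rw [← sup_inf_assoc_of_le Q hWX, hWQ.sup_eq_top, top_inf_eq]
  have hlt : Q ⊓ X < X := by
    refine lt_of_le_of_ne inf_le_right fun h => hWirr.1 ?_
    exact hWQ.disjoint.eq_bot_of_le (hWX.trans (inf_eq_right.mp h))
  obtain ⟨m, L, hLinj, hLrange, hL⟩ := ih _ (hn ▸ Submodule.finrank_lt_finrank_of_lt hlt)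
    (fun g v hv => Submodule.mem_inf.mpr ⟨hQ g v hv.1, hX g v hv.2⟩) rfl
  obtain ⟨e, he⟩ := hiso W hW hWirr
  have hrange : LinearMap.range (W.subtype ∘ₗ e.toLinearMap) = W := by
    rw [LinearMap.range_comp, LinearEquiv.range, Submodule.map_subtype_top]
  refine ⟨m + 1, ((W.subtype ∘ₗ e.toLinearMap).coprod L) ∘ₗ
    (Fin.consLinearEquiv k (fun _ => W₀)).symm.toLinearMap, ?_, ?_, fun g f => ?_⟩
  · rw [LinearMap.coe_comp]
    refine Function.Injective.comp ?_ (LinearEquiv.injective _)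
    rw [← LinearMap.ker_eq_bot, LinearMap.ker_coprod_of_disjoint_range]
    · rw [LinearMap.ker_eq_bot.mpr hLinj, LinearMap.ker_comp, Submodule.ker_subtype,
        Submodule.comap_bot, LinearEquiv.ker, Submodule.prod_bot]
    · rw [hrange, hLrange]
      exact hWQ.disjoint.mono_right inf_le_left
  · rw [LinearMap.range_comp_of_range_eq_top _ (LinearEquiv.range _), LinearMap.range_coprod,
      hrange, hLrange, hsup]
  · change (e (subRep σ W₀ hW₀ g (f 0)) : V) + L (fun i => subRep σ W₀ hW₀ g (f i.succ)) =
      σ g ((e (f 0) : V) + L (fun i => f i.succ))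
    rw [he, map_add, ← hL]
    rfl

lemma exists_tensor_equiv_of_isIsotypicOf (hiso : IsIsotypicOf σ W₀ hW₀) :
    ∃ (m : ℕ) (Φ : W₀ ⊗[k] (Fin m → k) ≃ₗ[k] V),
      ∀ g x, Φ (TensorProduct.map (subRep σ W₀ hW₀ g) LinearMap.id x) = σ g (Φ x) := by
  obtain ⟨m, L, hLinj, hLrange, hL⟩ :=
    exists_pi_linearMap_of_isIsotypicOf hiso (X := ⊤) fun _ _ _ => trivial
  let Φ := (TensorProduct.piScalarRight k k W₀ (Fin m)).trans
    (LinearEquiv.ofBijective L ⟨hLinj, LinearMap.range_eq_top.mp hLrange⟩)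
  refine ⟨m, Φ, fun g x => ?_⟩
  suffices Φ.toLinearMap ∘ₗ TensorProduct.map (subRep σ W₀ hW₀ g) LinearMap.id =
      σ g ∘ₗ Φ.toLinearMap from LinearMap.congr_fun this x
  refine TensorProduct.ext' fun w f => ?_
  simp only [LinearMap.comp_apply, TensorProduct.map_tmul, LinearMap.id_apply,
    LinearEquiv.coe_coe]
  change L _ = σ g (L _)
  rw [← hL]
  simp [TensorProduct.piScalarRight_apply, TensorProduct.piScalarRightHom_tmul]

end Isotypic

section Schur

variable {k Γ W : Type*} [Field k] [IsAlgClosed k] [Group Γ] [AddCommGroup W] [Module k W]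
  [FiniteDimensional k W] {τ : Representation k Γ W}

lemma exists_eq_smul_id_of_commute (hτ : IsIrred τ) {f : Module.End k W}
    (hf : ∀ g, f ∘ₗ τ g = τ g ∘ₗ f) : ∃ c : k, f = c • LinearMap.id := by
  have := hτ.1
  obtain ⟨c, hc⟩ := Module.End.exists_eigenvalue f
  refine ⟨c, ?_⟩
  have hinv : IsSubrep τ (f.eigenspace c) := fun g v hv => by
    rw [Module.End.mem_eigenspace_iff] at hv ⊢
    rw [← LinearMap.comp_apply, hf, LinearMap.comp_apply, hv, map_smul]
  rcases hτ.2 _ hinv with h | h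
  · exact absurd h hc
  · ext v
    simpa using Module.End.mem_eigenspace_iff.mp (h ▸ Submodule.mem_top : v ∈ f.eigenspace c)

lemma exists_eq_map_id_of_commute (hτ : IsIrred τ) {m : ℕ}
    {T : Module.End k (W ⊗[k] (Fin m → k))}
    (hT : ∀ g, T ∘ₗ TensorProduct.map (τ g) LinearMap.id =
      TensorProduct.map (τ g) LinearMap.id ∘ₗ T) :
    ∃ C : Module.End k (Fin m → k), T = TensorProduct.map LinearMap.id C := by
  let E := TensorProduct.piScalarRight k k W (Fin m)
  have hE : ∀ w (f : Fin m → k), E (w ⊗ₜ f) = fun i => f i • w := fun w f => by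
    simp [E, TensorProduct.piScalarRight_apply]
  -- the `(i, j)` block of `T` commutes with `τ`, hence is a scalar `c i j`
  have hblock : ∀ i j, ∃ c : k, LinearMap.proj i ∘ₗ E.toLinearMap ∘ₗ T ∘ₗ
      (TensorProduct.mk k W (Fin m → k)).flip (Pi.single j 1) = c • LinearMap.id := by
    intro i j
    refine exists_eq_smul_id_of_commute hτ fun g => LinearMap.ext fun w => ?_
    have hT' := LinearMap.congr_fun (hT g) (w ⊗ₜ Pi.single j 1)
    simp only [LinearMap.comp_apply, TensorProduct.map_tmul, LinearMap.id_apply] at hT'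
    simp only [LinearMap.comp_apply, LinearMap.flip_apply, TensorProduct.mk_apply, hT']
    induction T (w ⊗ₜ Pi.single j 1) using TensorProduct.induction_on with
    | zero => simp
    | tmul v f => simp [hE]
    | add x y hx hy => simp_all
  choose c hc using hblock
  refine ⟨Matrix.toLin' (Matrix.of c), TensorProduct.ext <| LinearMap.ext fun w =>
    (Pi.basisFun k (Fin m)).ext fun j => E.injective <| funext fun i => ?_⟩
  have := LinearMap.congr_fun (hc i j) w
  simp only [LinearMap.comp_apply, LinearMap.flip_apply, TensorProduct.mk_apply,
    LinearEquiv.coe_coe, LinearMap.proj_apply] at this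
  simp [this, hE]

end Schur

def IsTensorFactorization {k G V W U : Type*} [Field k] [Group G] [AddCommGroup V] [Module k V]
    [AddCommGroup W] [Module k W] [AddCommGroup U] [Module k U] (ρ : Representation k G V)
    (Φ : W ⊗[k] U ≃ₗ[k] V) : Prop :=
  ∀ g, ∃ (β : Module.End k W) (C : Module.End k U),
    ρ g ∘ₗ Φ.toLinearMap = Φ.toLinearMap ∘ₗ TensorProduct.map β C

section Clifford

variable {k G V : Type*} [Field k] [Group G] [AddCommGroup V] [Module k V]
  {ρ : Representation k G V} {H : Subgroup G}

lemma map_map_inv (ρ : Representation k G V) (g : G) (X : Submodule k V) :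
    (X.map (ρ g⁻¹)).map (ρ g) = X := by
  rw [← Submodule.map_comp, ← Module.End.mul_eq_comp, ← map_mul, mul_inv_cancel, map_one,
    Module.End.one_eq_id, Submodule.map_id]

lemma map_inv_map (ρ : Representation k G V) (g : G) (X : Submodule k V) :
    (X.map (ρ g)).map (ρ g⁻¹) = X := by
  simpa using map_map_inv ρ g⁻¹ X

lemma isSubrep_map_of_normal (hH : H.Normal) {X : Submodule k V}
    (hX : IsSubrep (ρ.comp H.subtype) X) (g : G) :
    IsSubrep (ρ.comp H.subtype) (X.map (ρ g)) := by
  rintro h _ ⟨x, hx, rfl⟩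
  have hmem : g⁻¹ * h * g ∈ H := by simpa using hH.conj_mem _ h.2 g⁻¹
  refine ⟨_, hX ⟨_, hmem⟩ x hx, ?_⟩
  change ρ g (ρ (g⁻¹ * h * g) x) = ρ h (ρ g x)
  simp [map_mul]

lemma subIrred_map_of_normal (hH : H.Normal) {X : Submodule k V}
    (hXirr : SubIrred (ρ.comp H.subtype) X) (g : G) :
    SubIrred (ρ.comp H.subtype) (X.map (ρ g)) := by
  refine ⟨fun h => hXirr.1 ?_, fun U hU hUinv => ?_⟩
  · rw [← map_inv_map ρ g X, h, Submodule.map_bot]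
  · have hU' : U.map (ρ g⁻¹) ≤ X := map_inv_map ρ g X ▸ Submodule.map_mono hU
    rcases hXirr.2 _ hU' (isSubrep_map_of_normal hH hUinv g⁻¹) with h | h
    · left; rw [← map_map_inv ρ g U, h, Submodule.map_bot]
    · right; rw [← map_map_inv ρ g U, h]

lemma exists_linearEquiv_conj_of_isIsotypicOf (hH : H.Normal) {W₀ : Submodule k V}
    {hW₀ : IsSubrep (ρ.comp H.subtype) W₀} (hW₀irr : SubIrred (ρ.comp H.subtype) W₀)
    (hiso : IsIsotypicOf (ρ.comp H.subtype) W₀ hW₀) (g : G) :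
    ∃ β : W₀ ≃ₗ[k] W₀, ∀ (h : H) w, β (subRep (ρ.comp H.subtype) W₀ hW₀ h w) =
      subRep (ρ.comp H.subtype) W₀ hW₀ ⟨_, hH.conj_mem _ h.2 g⟩ (β w) := by
  -- `β = ρ g ∘ e` for an `H`-isomorphism `e : W₀ ≅ ρ g⁻¹ W₀`
  obtain ⟨e, he⟩ :=
    hiso _ (isSubrep_map_of_normal hH hW₀ g⁻¹) (subIrred_map_of_normal hH hW₀irr g⁻¹)
  refine ⟨e.trans <| ((LinearEquiv.ofBijective (ρ g) (ρ.apply_bijective g)).submoduleMap _).trans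
    (LinearEquiv.ofEq _ _ (map_map_inv ρ g W₀)), fun h w => Subtype.ext ?_⟩
  change ρ g (e _) = ρ (g * h * g⁻¹) (ρ g (e w))
  rw [he]
  change ρ g (ρ h (e w)) = _
  simp [map_mul]

lemma isTensorFactorization_of_isIsotypicOf [IsAlgClosed k] [FiniteDimensional k V]
    (hH : H.Normal) {W₀ : Submodule k V} {hW₀ : IsSubrep (ρ.comp H.subtype) W₀}
    (hW₀irr : SubIrred (ρ.comp H.subtype) W₀) (hiso : IsIsotypicOf (ρ.comp H.subtype) W₀ hW₀)
    {m : ℕ} (Φ : W₀ ⊗[k] (Fin m → k) ≃ₗ[k] V)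
    (hΦ : ∀ h x, Φ (TensorProduct.map (subRep (ρ.comp H.subtype) W₀ hW₀ h) LinearMap.id x) =
      ρ h (Φ x)) :
    IsTensorFactorization ρ Φ := by
  intro g
  set τ := subRep (ρ.comp H.subtype) W₀ hW₀
  have hΦsymm : ∀ h (hh : h ∈ H) x,
      Φ.symm (ρ h x) = TensorProduct.map (τ ⟨h, hh⟩) LinearMap.id (Φ.symm x) := fun h hh x =>
    Φ.symm_apply_eq.mpr (by rw [hΦ, Φ.apply_symm_apply])
  obtain ⟨β, hβ⟩ := exists_linearEquiv_conj_of_isIsotypicOf hH hW₀irr hiso g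
  -- `(β⁻¹ ⊗ 1) ∘ Φ⁻¹ ∘ ρ g ∘ Φ` commutes with `H`, so it is `1 ⊗ C`
  obtain ⟨C, hC⟩ := exists_eq_map_id_of_commute (isIrred_subRep hW₀ hW₀irr)
    (T := TensorProduct.map β.symm.toLinearMap LinearMap.id ∘ₗ Φ.symm.toLinearMap ∘ₗ
      ρ g ∘ₗ Φ.toLinearMap) fun h => LinearMap.ext fun x => by
    have hτβ : β.symm.toLinearMap ∘ₗ τ ⟨_, hH.conj_mem _ h.2 g⟩ = τ h ∘ₗ β.symm.toLinearMap :=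
      LinearMap.ext fun w => by simp [LinearEquiv.symm_apply_eq, τ, hβ]
    have hgh : ρ g * ρ h = ρ (g * h * g⁻¹) * ρ g := by simp [← map_mul]
    simp only [LinearMap.comp_apply, LinearEquiv.coe_coe]
    rw [hΦ, ← Module.End.mul_apply, hgh, Module.End.mul_apply, hΦsymm _ (hH.conj_mem _ h.2 g),
      ← LinearMap.comp_apply, ← TensorProduct.map_comp, hτβ, TensorProduct.map_comp,
      LinearMap.comp_apply]
  refine ⟨β, C, LinearMap.ext fun x => Φ.symm.injective ?_⟩
  have hx := LinearMap.congr_fun hC x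
  simp only [LinearMap.comp_apply, LinearEquiv.coe_coe] at hx ⊢
  rw [Φ.symm_apply_apply]
  calc Φ.symm (ρ g (Φ x))
      = TensorProduct.map β.toLinearMap LinearMap.id
          (TensorProduct.map β.symm.toLinearMap LinearMap.id (Φ.symm (ρ g (Φ x)))) := by
        rw [← LinearMap.comp_apply (TensorProduct.map _ _), ← TensorProduct.map_comp]
        simp
    _ = TensorProduct.map β.toLinearMap C x := by
        rw [hx, ← LinearMap.comp_apply (TensorProduct.map _ _), ← TensorProduct.map_comp]
        simp

end Clifford

section Multiplicity

variable {k G V : Type*} [Field k] [Group G] [AddCommGroup V] [Module k V]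

lemma two_le_of_not_isIrred [FiniteDimensional k V] {σ : Representation k G V}
    {W₀ : Submodule k V} (hW₀ : SubIrred σ W₀) {m : ℕ} (Φ : W₀ ⊗[k] (Fin m → k) ≃ₗ[k] V)
    (h : ¬ IsIrred σ) : 2 ≤ m := by
  have hV : Module.finrank k V = Module.finrank k W₀ * m := by
    rw [← Φ.finrank_eq, Module.finrank_tensorProduct, Module.finrank_fin_fun]
  have h₁ := Submodule.one_le_finrank_iff.mpr hW₀.1
  have hle := Submodule.finrank_le W₀
  by_contra hm
  obtain rfl : m = 1 := by nlinarith
  have htop : W₀ = ⊤ := Submodule.eq_top_of_finrank_eq (by rw [hV, mul_one])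
  exact h (isIrred_of_subIrred_top (htop ▸ hW₀))

lemma mem_center_of_eq_smul_id {ρ : Representation k G V} (hρ : Function.Injective ρ) {x : G}
    {c : k} (hx : ρ x = c • LinearMap.id) : x ∈ Subgroup.center G :=
  Subgroup.mem_center_iff.mpr fun g => hρ <| by
    rw [map_mul, map_mul, hx, Module.End.mul_eq_comp, Module.End.mul_eq_comp,
      LinearMap.comp_smul, LinearMap.smul_comp, LinearMap.id_comp, LinearMap.comp_id]

lemma two_le_finrank_of_not_le_center [FiniteDimensional k V] {ρ : Representation k G V}
    (hρ : Function.Injective ρ) {H : Subgroup G} (hH : ¬ H ≤ Subgroup.center G)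
    {W₀ : Submodule k V}
    {hW₀ : IsSubrep (ρ.comp H.subtype) W₀} (hW₀irr : SubIrred (ρ.comp H.subtype) W₀) {m : ℕ}
    (Φ : W₀ ⊗[k] (Fin m → k) ≃ₗ[k] V)
    (hΦ : ∀ h x, Φ (TensorProduct.map (subRep (ρ.comp H.subtype) W₀ hW₀ h) LinearMap.id x) =
      ρ h (Φ x)) :
    2 ≤ Module.finrank k W₀ := by
  have h₁ := Submodule.one_le_finrank_iff.mpr hW₀irr.1
  by_contra hW
  refine hH fun x hx => ?_
  obtain ⟨c, hc, -⟩ := (subRep (ρ.comp H.subtype) W₀ hW₀ ⟨x, hx⟩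
    ).existsUnique_eq_smul_id_of_finrank_eq_one (by omega)
  refine mem_center_of_eq_smul_id hρ (c := c) (LinearMap.ext fun v => ?_)
  rw [← Φ.apply_symm_apply v, ← hΦ ⟨x, hx⟩, hc, TensorProduct.map_smul_left]
  simp

end Multiplicity

section Projections

variable {k M N : Type*} [Field k] [AddCommGroup M] [Module k M] [AddCommGroup N] [Module k N]

/-- For an involution `a`, the projections onto its `±1`-eigenspaces; for `a = tau k M` these
project `M ⊗ M` onto `S²M` and `Λ²M`. -/
def plusProj (a : Module.End k M) : Module.End k M := (2⁻¹ : k) • (1 + a)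

def minusProj (a : Module.End k M) : Module.End k M := (2⁻¹ : k) • (1 - a)

lemma map_plusProj_add_map_minusProj [NeZero (2 : k)] (a : Module.End k M) (b : Module.End k N) :
    TensorProduct.map (plusProj a) (plusProj b) + TensorProduct.map (minusProj a) (minusProj b) =
      plusProj (TensorProduct.map a b) := by
  refine TensorProduct.ext' fun x y => ?_
  simp only [plusProj, minusProj, LinearMap.add_apply, TensorProduct.map_tmul,
    LinearMap.smul_apply, Module.End.one_apply, LinearMap.sub_apply, TensorProduct.tmul_add,
    TensorProduct.tmul_sub, TensorProduct.add_tmul, TensorProduct.sub_tmul,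
    TensorProduct.tmul_smul, ← TensorProduct.smul_tmul']
  match_scalars <;> field_simp <;> ring

lemma map_plusProj_minusProj_add [NeZero (2 : k)] (a : Module.End k M) (b : Module.End k N) :
    TensorProduct.map (plusProj a) (minusProj b) + TensorProduct.map (minusProj a) (plusProj b) =
      minusProj (TensorProduct.map a b) := by
  refine TensorProduct.ext' fun x y => ?_
  simp only [plusProj, minusProj, LinearMap.add_apply, TensorProduct.map_tmul,
    LinearMap.smul_apply, Module.End.one_apply, LinearMap.sub_apply, TensorProduct.tmul_add,
    TensorProduct.tmul_sub, TensorProduct.add_tmul, TensorProduct.sub_tmul,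
    TensorProduct.tmul_smul, ← TensorProduct.smul_tmul']
  match_scalars <;> field_simp <;> ring

variable {a : Module.End k M}

lemma mul_plusProj (ha : a * a = 1) : a * plusProj a = plusProj a := by
  simp only [plusProj, mul_smul_comm, mul_add, mul_one, ha]
  abel_nf

lemma mul_minusProj (ha : a * a = 1) : a * minusProj a = -minusProj a := by
  simp only [minusProj, mul_smul_comm, mul_sub, mul_one, ha, ← smul_neg, neg_sub]

lemma minusProj_mul (ha : a * a = 1) : minusProj a * a = -minusProj a := by
  simp only [minusProj, smul_mul_assoc, sub_mul, one_mul, ha, ← smul_neg, neg_sub]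

variable [NeZero (2 : k)]

lemma plusProj_mul_self (ha : a * a = 1) : plusProj a * plusProj a = plusProj a := by
  simp only [plusProj, smul_mul_smul_comm, add_mul, mul_add, one_mul, mul_one, ha]
  match_scalars <;> field_simp <;> ring

lemma minusProj_mul_self (ha : a * a = 1) : minusProj a * minusProj a = minusProj a := by
  simp only [minusProj, smul_mul_smul_comm, sub_mul, mul_sub, one_mul, mul_one, ha]
  match_scalars <;> field_simp <;> ring

lemma plusProj_mul_minusProj (ha : a * a = 1) : plusProj a * minusProj a = 0 := by
  simp only [plusProj, minusProj, smul_mul_smul_comm, add_mul, mul_sub, one_mul, mul_one, ha]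
  match_scalars <;> field_simp <;> ring

lemma minusProj_mul_plusProj (ha : a * a = 1) : minusProj a * plusProj a = 0 := by
  simp only [plusProj, minusProj, smul_mul_smul_comm, sub_mul, mul_add, one_mul, mul_one, ha]
  match_scalars <;> field_simp <;> ring

lemma eigenspace_one_eq_range_plusProj (ha : a * a = 1) :
    a.eigenspace 1 = LinearMap.range (plusProj a) := by
  ext x
  rw [Module.End.mem_eigenspace_iff, one_smul]
  refine ⟨fun hx => ⟨x, ?_⟩, ?_⟩
  · simp only [plusProj, LinearMap.smul_apply, LinearMap.add_apply, Module.End.one_apply, hx]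
    match_scalars; field_simp; ring
  · rintro ⟨y, rfl⟩
    rw [← Module.End.mul_apply, mul_plusProj ha]

lemma eigenspace_neg_one_eq_range_minusProj (ha : a * a = 1) :
    a.eigenspace (-1) = LinearMap.range (minusProj a) := by
  ext x
  rw [Module.End.mem_eigenspace_iff, neg_one_smul]
  refine ⟨fun hx => ⟨x, ?_⟩, ?_⟩
  · simp only [minusProj, LinearMap.smul_apply, LinearMap.sub_apply, Module.End.one_apply, hx]
    match_scalars; field_simp; ring
  · rintro ⟨y, rfl⟩
    rw [← Module.End.mul_apply, mul_minusProj ha, LinearMap.neg_apply]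

end Projections

section Idempotents

variable {k Z : Type*} [Field k] [AddCommGroup Z] [Module k Z] {P Q : Module.End k Z}

lemma disjoint_range_of_mul_eq_zero (hP : P * P = P) (hPQ : P * Q = 0) :
    Disjoint (LinearMap.range P) (LinearMap.range Q) := by
  rw [Submodule.disjoint_def]
  rintro _ ⟨x, rfl⟩ ⟨y, hy⟩
  rw [← hP, Module.End.mul_apply, ← hy, ← Module.End.mul_apply, hPQ, LinearMap.zero_apply]

lemma range_add_eq_sup (hP : P * P = P) (hQ : Q * Q = Q) (hPQ : P * Q = 0) (hQP : Q * P = 0) :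
    LinearMap.range (P + Q) = LinearMap.range P ⊔ LinearMap.range Q := by
  refine le_antisymm (LinearMap.range_add_le P Q) (sup_le ?_ ?_) <;> rintro _ ⟨x, rfl⟩
  · exact ⟨P x, by rw [← Module.End.mul_apply, add_mul, hP, hQP, add_zero]⟩
  · exact ⟨Q x, by rw [← Module.End.mul_apply, add_mul, hQ, hPQ, zero_add]⟩

variable {Z' : Type*} [AddCommGroup Z'] [Module k Z'] (e : Z ≃ₗ[k] Z')

lemma conj_mul (a b : Module.End k Z) : e.conj (a * b) = e.conj a * e.conj b := by
  simp [Module.End.mul_eq_comp, LinearEquiv.conj_comp]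

lemma conj_eq_of_comp_eq {a : Module.End k Z} {b : Module.End k Z'}
    (h : b ∘ₗ e.toLinearMap = e.toLinearMap ∘ₗ a) : e.conj a = b := by
  rw [LinearEquiv.conj_apply, ← h, LinearMap.comp_assoc, ← LinearEquiv.coe_trans,
    LinearEquiv.symm_trans_self, LinearEquiv.refl_toLinearMap, LinearMap.comp_id]

lemma range_conj (a : Module.End k Z) :
    LinearMap.range (e.conj a) = (LinearMap.range a).map e.toLinearMap := by
  rw [LinearEquiv.conj_apply, LinearMap.range_comp_of_range_eq_top _ (LinearEquiv.range _),
    LinearMap.range_comp]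

lemma plusProj_conj (a : Module.End k Z) : plusProj (e.conj a) = e.conj (plusProj a) := by
  simp [plusProj, Module.End.one_eq_id]

lemma minusProj_conj (a : Module.End k Z) : minusProj (e.conj a) = e.conj (minusProj a) := by
  simp [minusProj, Module.End.one_eq_id]

end Idempotents

section TensorSquare

variable {k W U V : Type*} [Field k] [AddCommGroup W] [Module k W] [AddCommGroup U] [Module k U]
  [AddCommGroup V] [Module k V]

lemma tau_mul_self (M : Type*) [AddCommGroup M] [Module k M] : tau k M * tau k M = 1 :=
  TensorProduct.ext' fun _ _ => rfl

lemma commute_map_tau {M : Type*} [AddCommGroup M] [Module k M] (β : Module.End k M) :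
    Commute (TensorProduct.map β β) (tau k M) :=
  TensorProduct.ext' fun _ _ => rfl

lemma commute_map_plusProj_tau {M : Type*} [AddCommGroup M] [Module k M] (β : Module.End k M) :
    Commute (TensorProduct.map β β) (plusProj (tau k M)) :=
  ((Commute.one_right _).add_right (commute_map_tau β)).smul_right _

lemma commute_map_minusProj_tau {M : Type*} [AddCommGroup M] [Module k M] (β : Module.End k M) :
    Commute (TensorProduct.map β β) (minusProj (tau k M)) :=
  ((Commute.one_right _).sub_right (commute_map_tau β)).smul_right _

lemma map_minusProj_tau_mul_map_tau :
    TensorProduct.map (minusProj (tau k W)) (minusProj (tau k U)) *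
      TensorProduct.map (tau k W) (tau k U) =
    TensorProduct.map (minusProj (tau k W)) (minusProj (tau k U)) := by
  rw [← TensorProduct.map_mul, minusProj_mul (tau_mul_self W), minusProj_mul (tau_mul_self U),
    ← neg_one_smul k, TensorProduct.map_smul_left, ← neg_one_smul k (minusProj _),
    TensorProduct.map_smul_right, smul_smul, neg_one_mul, neg_neg, one_smul]

noncomputable def tensorSquareEquiv (Φ : W ⊗[k] U ≃ₗ[k] V) :
    (W ⊗[k] W) ⊗[k] (U ⊗[k] U) ≃ₗ[k] V ⊗[k] V :=
  (TensorProduct.tensorTensorTensorComm k W W U U).trans (TensorProduct.congr Φ Φ)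

lemma conj_map_tau (Φ : W ⊗[k] U ≃ₗ[k] V) :
    (tensorSquareEquiv Φ).conj (TensorProduct.map (tau k W) (tau k U)) = tau k V :=
  conj_eq_of_comp_eq _ (TensorProduct.ext_fourfold' fun _ _ _ _ => rfl)

lemma conj_map_map {Φ : W ⊗[k] U ≃ₗ[k] V} {S : Module.End k V} {β : Module.End k W}
    {C : Module.End k U} (h : S ∘ₗ Φ.toLinearMap = Φ.toLinearMap ∘ₗ TensorProduct.map β C) :
    (tensorSquareEquiv Φ).conj (TensorProduct.map (TensorProduct.map β β) (TensorProduct.map C C)) =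
      TensorProduct.map S S :=
  conj_eq_of_comp_eq _ <| TensorProduct.ext_fourfold' fun w₁ w₂ u₁ u₂ => by
    simpa [tensorSquareEquiv] using
      congr_arg₂ (· ⊗ₜ[k] ·) (LinearMap.congr_fun h (w₁ ⊗ₜ u₁)) (LinearMap.congr_fun h (w₂ ⊗ₜ u₂))

/-- The image in `V ⊗ V` of `range f ⊗ range g`; e.g. `Λ²W ⊗ Λ²U` for the `minusProj`s. -/
noncomputable def tensorBlock (Φ : W ⊗[k] U ≃ₗ[k] V) (f : Module.End k (W ⊗[k] W))
    (g : Module.End k (U ⊗[k] U)) : Submodule k (V ⊗[k] V) :=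
  LinearMap.range ((tensorSquareEquiv Φ).conj (TensorProduct.map f g))

lemma finrank_tensorBlock (Φ : W ⊗[k] U ≃ₗ[k] V) (f : Module.End k (W ⊗[k] W))
    (g : Module.End k (U ⊗[k] U)) :
    Module.finrank k (tensorBlock Φ f g) =
      Module.finrank k (LinearMap.range (TensorProduct.map f g)) := by
  rw [tensorBlock, range_conj, LinearEquiv.finrank_map_eq]

lemma commute_tprod_conj_map {G : Type*} [Group G] {ρ : Representation k G V}
    {Φ : W ⊗[k] U ≃ₗ[k] V} (hfac : IsTensorFactorization ρ Φ)
    {f : Module.End k (W ⊗[k] W)} {f' : Module.End k (U ⊗[k] U)}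
    (hf : ∀ β : Module.End k W, Commute (TensorProduct.map β β) f)
    (hf' : ∀ C : Module.End k U, Commute (TensorProduct.map C C) f') (g : G) :
    Commute (ρ.tprod ρ g) ((tensorSquareEquiv Φ).conj (TensorProduct.map f f')) := by
  obtain ⟨β, C, h⟩ := hfac g
  rw [Representation.tprod_apply, ← conj_map_map h, Commute, SemiconjBy, ← conj_mul, ← conj_mul,
    ← TensorProduct.map_mul, ← TensorProduct.map_mul, (hf β).eq, (hf' C).eq]

lemma isSubrep_tensorBlock {G : Type*} [Group G] {ρ : Representation k G V}
    {Φ : W ⊗[k] U ≃ₗ[k] V} (hfac : IsTensorFactorization ρ Φ)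
    {f : Module.End k (W ⊗[k] W)} {f' : Module.End k (U ⊗[k] U)}
    (hf : ∀ β : Module.End k W, Commute (TensorProduct.map β β) f)
    (hf' : ∀ C : Module.End k U, Commute (TensorProduct.map C C) f') :
    IsSubrep (ρ.tprod ρ) (tensorBlock Φ f f') := by
  rintro g _ ⟨x, rfl⟩
  exact ⟨ρ.tprod ρ g x, by
    rw [← Module.End.mul_apply, ← (commute_tprod_conj_map hfac hf hf' g).eq, Module.End.mul_apply]⟩

lemma disjoint_tensorBlock_and_sup_eq {Φ : W ⊗[k] U ≃ₗ[k] V} {f₁ f₂ : Module.End k (W ⊗[k] W)}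
    {g₁ g₂ : Module.End k (U ⊗[k] U)} (hf₁ : f₁ * f₁ = f₁) (hf₂ : f₂ * f₂ = f₂)
    (hf₁₂ : f₁ * f₂ = 0) (hf₂₁ : f₂ * f₁ = 0) (hg₁ : g₁ * g₁ = g₁) (hg₂ : g₂ * g₂ = g₂) :
    Disjoint (tensorBlock Φ f₁ g₁) (tensorBlock Φ f₂ g₂) ∧
      tensorBlock Φ f₁ g₁ ⊔ tensorBlock Φ f₂ g₂ = LinearMap.range ((tensorSquareEquiv Φ).conj
        (TensorProduct.map f₁ g₁ + TensorProduct.map f₂ g₂)) := by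
  have hmul : ∀ f f' g g', (tensorSquareEquiv Φ).conj (TensorProduct.map f g) *
      (tensorSquareEquiv Φ).conj (TensorProduct.map f' g') =
        (tensorSquareEquiv Φ).conj (TensorProduct.map (f * f') (g * g')) := fun _ _ _ _ => by
    rw [← conj_mul, TensorProduct.map_mul]
  have h₁ := hmul f₁ f₁ g₁ g₁
  have h₁₂ := hmul f₁ f₂ g₁ g₂
  rw [hf₁, hg₁] at h₁
  rw [hf₁₂, TensorProduct.map_zero_left, map_zero] at h₁₂
  refine ⟨disjoint_range_of_mul_eq_zero h₁ h₁₂, ?_⟩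
  rw [map_add, range_add_eq_sup h₁ (by rw [hmul, hf₂, hg₂]) h₁₂
    (by rw [hmul, hf₂₁, TensorProduct.map_zero_left, map_zero])]
  rfl

variable [NeZero (2 : k)]

lemma tsq_one_eq_tensorBlock_sup (Φ : W ⊗[k] U ≃ₗ[k] V) :
    Disjoint (tensorBlock Φ (plusProj (tau k W)) (plusProj (tau k U)))
        (tensorBlock Φ (minusProj (tau k W)) (minusProj (tau k U))) ∧
      tensorBlock Φ (plusProj (tau k W)) (plusProj (tau k U)) ⊔
        tensorBlock Φ (minusProj (tau k W)) (minusProj (tau k U)) = Tsq k V 1 := by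
  have hW := tau_mul_self (k := k) W
  have hU := tau_mul_self (k := k) U
  obtain ⟨hdisj, hsup⟩ := disjoint_tensorBlock_and_sup_eq (Φ := Φ) (plusProj_mul_self hW)
    (minusProj_mul_self hW) (plusProj_mul_minusProj hW) (minusProj_mul_plusProj hW)
    (plusProj_mul_self hU) (minusProj_mul_self hU)
  rw [hsup, map_plusProj_add_map_minusProj, ← plusProj_conj, conj_map_tau,
    ← eigenspace_one_eq_range_plusProj (tau_mul_self V)]
  exact ⟨hdisj, by rw [Tsq, Int.cast_one]⟩

lemma tsq_neg_one_eq_tensorBlock_sup (Φ : W ⊗[k] U ≃ₗ[k] V) :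
    Disjoint (tensorBlock Φ (plusProj (tau k W)) (minusProj (tau k U)))
        (tensorBlock Φ (minusProj (tau k W)) (plusProj (tau k U))) ∧
      tensorBlock Φ (plusProj (tau k W)) (minusProj (tau k U)) ⊔
        tensorBlock Φ (minusProj (tau k W)) (plusProj (tau k U)) = Tsq k V (-1) := by
  have hW := tau_mul_self (k := k) W
  have hU := tau_mul_self (k := k) U
  obtain ⟨hdisj, hsup⟩ := disjoint_tensorBlock_and_sup_eq (Φ := Φ) (plusProj_mul_self hW)
    (minusProj_mul_self hW) (plusProj_mul_minusProj hW) (minusProj_mul_plusProj hW)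
    (minusProj_mul_self hU) (plusProj_mul_self hU)
  rw [hsup, map_plusProj_minusProj_add, ← minusProj_conj, conj_map_tau,
    ← eigenspace_neg_one_eq_range_minusProj (tau_mul_self V)]
  exact ⟨hdisj, by rw [Tsq, Int.cast_neg, Int.cast_one]⟩

end TensorSquare

lemma finrank_eq_one_of_isSmall {k G V : Type*} [Field k] [Group G] [AddCommGroup V]
    [Module k V] [FiniteDimensional k V] {ρ : Representation k G V} {ε : ℤ}
    (hsmall : IsSmall ρ ε) {A B : Submodule k (V ⊗[k] V)} (hA : IsSubrep (ρ.tprod ρ) A)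
    (hAB : Disjoint A B) (hsup : A ⊔ B = Tsq k V ε) (hA₂ : 2 ≤ Module.finrank k A)
    (hB : B ≠ ⊥) : Module.finrank k B = 1 := by
  have hdim : Module.finrank k A + Module.finrank k B = Module.finrank k (Tsq k V ε) := by
    rw [← Submodule.finrank_sup_add_finrank_inf_eq, hsup, hAB.eq_bot, finrank_bot, add_zero]
  have hB₁ : 1 ≤ Module.finrank k B := Submodule.one_le_finrank_iff.mpr hB
  have hA₀ : A ≠ ⊥ := fun h => by rw [h, finrank_bot] at hA₂; omega
  have hAT : A ≤ Tsq k V ε := hsup ▸ le_sup_left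
  rcases hsmall with ⟨-, -, hirr⟩ | ⟨W₁, W₂, hW₁, -, hW₁₂, hW₁₂sup, ⟨-, hW₁irr⟩, hW₂, -⟩
  · rcases hirr A hAT hA with h | h
    · exact absurd h hA₀
    · exact absurd (hAB.symm.eq_bot_of_le ((le_sup_right.trans hsup.le).trans h.ge)) hB
  · have hdim' : Module.finrank k W₁ + 1 = Module.finrank k (Tsq k V ε) := by
      rw [← hW₂, ← Submodule.finrank_sup_add_finrank_inf_eq, hW₁₂sup, hW₁₂.eq_bot, finrank_bot,
        add_zero]
    -- `W₁ ⊓ A = ⊥` would force `dim A ≤ 1`; hence `W₁ ≤ A`, leaving at most one dimension for `B`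
    rcases hW₁irr (W₁ ⊓ A) inf_le_left
      (fun g v hv => Submodule.mem_inf.mpr ⟨hW₁ g v hv.1, hA g v hv.2⟩) with h | h
    · have := Submodule.finrank_sup_add_finrank_inf_eq W₁ A
      rw [h, finrank_bot, add_zero] at this
      have := Submodule.finrank_mono (sup_le (hW₁₂sup ▸ le_sup_left) hAT)
      omega
    · have := Submodule.finrank_mono (inf_eq_left.mp h)
      omega

section Ranks

variable {k M N : Type*} [Field k] [AddCommGroup M] [Module k M] [AddCommGroup N] [Module k N]
  [FiniteDimensional k M] [FiniteDimensional k N]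

lemma finrank_range_mul_le_finrank_range_map (f : Module.End k M) (g : Module.End k N) :
    Module.finrank k (LinearMap.range f) * Module.finrank k (LinearMap.range g) ≤
      Module.finrank k (LinearMap.range (TensorProduct.map f g)) := by
  let b := Module.finBasis k (LinearMap.range f)
  let c := Module.finBasis k (LinearMap.range g)
  have hmem : ∀ x ∈ LinearMap.range f, ∀ y ∈ LinearMap.range g,
      x ⊗ₜ[k] y ∈ LinearMap.range (TensorProduct.map f g) := by
    rintro _ ⟨x, rfl⟩ _ ⟨y, rfl⟩
    exact ⟨x ⊗ₜ y, rfl⟩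
  have hb := b.linearIndependent.map' (LinearMap.range f).subtype (Submodule.ker_subtype _)
  have hc := c.linearIndependent.map' (LinearMap.range g).subtype (Submodule.ker_subtype _)
  have hbc := hb.tmul_of_flat_left hc
  let v : Fin (Module.finrank k (LinearMap.range f)) × Fin (Module.finrank k (LinearMap.range g)) →
      LinearMap.range (TensorProduct.map f g) :=
    fun ij => ⟨(b ij.1 : M) ⊗ₜ[k] (c ij.2 : N), hmem _ (b ij.1).2 _ (c ij.2).2⟩
  have hv : LinearIndependent k v := LinearIndependent.of_comp (Submodule.subtype _) hbc
  have := hv.fintype_card_le_finrank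
  rwa [Fintype.card_prod, Fintype.card_fin, Fintype.card_fin] at this

variable {Z : Type*} [AddCommGroup Z] [Module k Z]

lemma two_le_finrank_of_triangular {A : Submodule k Z} [FiniteDimensional k A] {x y : Z}
    (hx : x ∈ A) (hy : y ∈ A) (φ ψ : Z →ₗ[k] k) (hφx : φ x ≠ 0) (hφy : φ y = 0)
    (hψy : ψ y ≠ 0) : 2 ≤ Module.finrank k A := by
  have hli : LinearIndependent k ![x, y] := by
    refine LinearIndependent.pair_iff.mpr fun s t hst => ?_
    have hs : s = 0 := by simpa [hφy, hφx] using congr_arg φ hst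
    subst hs
    simpa [hψy] using congr_arg ψ hst
  have hspan : Submodule.span k (Set.range ![x, y]) ≤ A := by
    rw [Submodule.span_le, Matrix.range_cons, Matrix.range_cons, Matrix.range_empty]
    simp [Set.insert_subset_iff, hx, hy]
  simpa [finrank_span_eq_card hli] using Submodule.finrank_mono hspan

lemma le_finrank_tensorBlock {V : Type*} [AddCommGroup V] [Module k V] (Φ : M ⊗[k] N ≃ₗ[k] V)
    (f : Module.End k (M ⊗[k] M)) (g : Module.End k (N ⊗[k] N)) :
    Module.finrank k (LinearMap.range f) * Module.finrank k (LinearMap.range g) ≤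
      Module.finrank k (tensorBlock Φ f g) :=
  finrank_tensorBlock Φ f g ▸ finrank_range_mul_le_finrank_range_map f g

end Ranks

section TauRanks

variable {k M : Type*} [Field k] [NeZero (2 : k)] [AddCommGroup M] [Module k M]
  [FiniteDimensional k M]

lemma two_le_finrank_range_plusProj_tau (h : 2 ≤ Module.finrank k M) :
    2 ≤ Module.finrank k (LinearMap.range (plusProj (tau k M))) := by
  let b := Module.finBasis k M
  let i₀ : Fin (Module.finrank k M) := ⟨0, by omega⟩
  let i₁ : Fin (Module.finrank k M) := ⟨1, by omega⟩
  have h₀₁ : i₀ ≠ i₁ := by simp [i₀, i₁, Fin.ext_iff]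
  refine two_le_finrank_of_triangular ⟨b i₀ ⊗ₜ b i₀, rfl⟩ ⟨b i₁ ⊗ₜ b i₁, rfl⟩
    ((b.tensorProduct b).coord (i₀, i₀)) ((b.tensorProduct b).coord (i₁, i₁)) ?_ ?_ ?_ <;>
  simp [plusProj, tau, h₀₁, ← two_mul, two_ne_zero]

lemma one_le_finrank_range_minusProj_tau (h : 2 ≤ Module.finrank k M) :
    1 ≤ Module.finrank k (LinearMap.range (minusProj (tau k M))) := by
  let b := Module.finBasis k M
  let i₀ : Fin (Module.finrank k M) := ⟨0, by omega⟩
  let i₁ : Fin (Module.finrank k M) := ⟨1, by omega⟩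
  have h₀₁ : i₀ ≠ i₁ := by simp [i₀, i₁, Fin.ext_iff]
  refine Submodule.one_le_finrank_iff.mpr <| (Submodule.ne_bot_iff _).mpr
    ⟨_, ⟨b i₀ ⊗ₜ b i₁, rfl⟩, fun h0 => ?_⟩
  simpa [minusProj, tau, h₀₁, h₀₁.symm, two_ne_zero] using
    congr_arg ((b.tensorProduct b).coord (i₀, i₁)) h0

lemma two_le_finrank_range_minusProj_tau (h : 3 ≤ Module.finrank k M) :
    2 ≤ Module.finrank k (LinearMap.range (minusProj (tau k M))) := by
  let b := Module.finBasis k M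
  let i₀ : Fin (Module.finrank k M) := ⟨0, by omega⟩
  let i₁ : Fin (Module.finrank k M) := ⟨1, by omega⟩
  let i₂ : Fin (Module.finrank k M) := ⟨2, by omega⟩
  have h₀₁ : i₀ ≠ i₁ := by simp [i₀, i₁, Fin.ext_iff]
  have h₀₂ : i₀ ≠ i₂ := by simp [i₀, i₂, Fin.ext_iff]
  have h₁₂ : i₁ ≠ i₂ := by simp [i₁, i₂, Fin.ext_iff]
  refine two_le_finrank_of_triangular ⟨b i₀ ⊗ₜ b i₁, rfl⟩ ⟨b i₀ ⊗ₜ b i₂, rfl⟩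
    ((b.tensorProduct b).coord (i₀, i₁)) ((b.tensorProduct b).coord (i₀, i₂)) ?_ ?_ ?_ <;>
  simp [minusProj, tau, h₀₁, h₀₁.symm, h₀₂, h₀₂.symm, h₁₂, two_ne_zero]

end TauRanks

section Characters

variable {k Γ Z : Type*} [Field k] [Group Γ] [AddCommGroup Z] [Module k Z]

lemma exists_character_of_finrank_eq_one {σ : Representation k Γ Z} {L : Submodule k Z}
    (hL : IsSubrep σ L) (h₁ : Module.finrank k L = 1) :
    ∃ χ : Γ →* kˣ, ∀ g, ∀ x ∈ L, σ g x = (χ g : k) • x := by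
  choose c hc huniq using fun g =>
    (subRep σ L hL g).existsUnique_eq_smul_id_of_finrank_eq_one h₁
  let χ : Γ →* k :=
    { toFun := c
      map_one' := (huniq 1 1 (by simp only [map_one, one_smul]; rfl)).symm
      map_mul' := fun g h => (huniq _ _ (by
        simp only
        rw [map_mul, hc, hc, Module.End.mul_eq_comp, LinearMap.comp_smul, LinearMap.smul_comp,
          smul_smul, LinearMap.id_comp, mul_comm])).symm }
  refine ⟨χ.toHomUnits, fun g x hx => ?_⟩
  exact congr_arg Subtype.val (LinearMap.congr_fun (hc g) ⟨x, hx⟩)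

end Characters

lemma quadSimilitude_of_functional {k G V : Type*} [Field k] [NeZero (2 : k)] [Group G]
    [AddCommGroup V] [Module k V] {ρ : Representation k G V} (hirr : IsIrred ρ)
    {f : V ⊗[k] V →ₗ[k] k} (hf : f ≠ 0) (hτ : f ∘ₗ tau k V = f) (χ : G →* kˣ)
    (hχ : ∀ g x, f (ρ.tprod ρ g x) = χ g * f x) : QuadSimilitude ρ := by
  let B : LinearMap.BilinForm k V := (TensorProduct.mk k V V).compr₂ f
  have hB : ∀ v w, B v w = f (v ⊗ₜ w) := fun _ _ => rfl
  have hsymm : ∀ v w, B w v = B v w := fun v w => by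
    rw [hB, hB, ← LinearMap.congr_fun hτ (v ⊗ₜ w)]
    rfl
  have hequiv : ∀ g v w, B (ρ g v) (ρ g w) = χ g * B v w := fun g v w => by
    rw [hB, hB, ← hχ, Representation.tprod_apply, TensorProduct.map_tmul]
  have hker : ∀ v, (∀ w, B v w = 0) → v = 0 := by
    have hinv : IsSubrep ρ (LinearMap.ker B) := fun g v hv => LinearMap.ext fun w => by
      rw [← Representation.self_inv_apply ρ g w, LinearMap.zero_apply, hequiv,
        LinearMap.mem_ker.mp hv, LinearMap.zero_apply, mul_zero]
    rcases hirr.2 _ hinv with h | h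
    · exact fun v hv => (Submodule.mem_bot k).mp (h ▸ LinearMap.mem_ker.mpr (LinearMap.ext hv))
    · refine absurd (TensorProduct.ext' fun v w => ?_) hf
      rw [← hB, LinearMap.mem_ker.mp (h ▸ Submodule.mem_top : v ∈ LinearMap.ker B)]
      rfl
  have hpolar : ∀ v w, QuadraticMap.polarBilin B.toQuadraticMap v w = 2 * B v w := fun v w => by
    rw [QuadraticMap.polarBilin_apply_apply, LinearMap.BilinMap.polar_toQuadraticMap, hsymm,
      two_mul]
  refine ⟨B.toQuadraticMap, χ, ⟨fun v hv => hker v fun w => ?_, fun w hw => hker w fun v => ?_⟩,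
    fun g v => hequiv g v v⟩
  · simpa [hpolar, two_ne_zero] using hv w
  · simpa [hpolar, hsymm, two_ne_zero] using hw v

section TensorFactorization

variable {k G V W U : Type*} [Field k] [NeZero (2 : k)] [Group G] [AddCommGroup V] [Module k V]
  [AddCommGroup W] [Module k W] [AddCommGroup U] [Module k U]
  {ρ : Representation k G V} {Φ : W ⊗[k] U ≃ₗ[k] V}

lemma not_isSmall_neg_one_of_isTensorFactorization [FiniteDimensional k V]
    [FiniteDimensional k W] [FiniteDimensional k U] (hfac : IsTensorFactorization ρ Φ)
    (hW : 2 ≤ Module.finrank k W) (hU : 2 ≤ Module.finrank k U) : ¬ IsSmall ρ (-1) := by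
  intro hsmall
  obtain ⟨hdisj, hsup⟩ := tsq_neg_one_eq_tensorBlock_sup (k := k) Φ
  have hA := le_finrank_tensorBlock Φ (plusProj (tau k W)) (minusProj (tau k U))
  have hB := le_finrank_tensorBlock Φ (minusProj (tau k W)) (plusProj (tau k U))
  have h₁ := two_le_finrank_range_plusProj_tau hW
  have h₂ := one_le_finrank_range_minusProj_tau hU
  have h₃ := one_le_finrank_range_minusProj_tau hW
  have h₄ := two_le_finrank_range_plusProj_tau hU
  have := finrank_eq_one_of_isSmall hsmall
    (isSubrep_tensorBlock hfac commute_map_plusProj_tau commute_map_minusProj_tau) hdisj hsup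
    (by nlinarith) (Submodule.one_le_finrank_iff.mp (by nlinarith))
  nlinarith

lemma finrank_tensorBlock_minusProj_eq_one [FiniteDimensional k V] [FiniteDimensional k W]
    [FiniteDimensional k U] (hsmall : IsSmall ρ 1) (hfac : IsTensorFactorization ρ Φ)
    (hW : 2 ≤ Module.finrank k W) (hU : 2 ≤ Module.finrank k U) :
    Module.finrank k (tensorBlock Φ (minusProj (tau k W)) (minusProj (tau k U))) = 1 := by
  obtain ⟨hdisj, hsup⟩ := tsq_one_eq_tensorBlock_sup (k := k) Φ
  have hA := le_finrank_tensorBlock Φ (plusProj (tau k W)) (plusProj (tau k U))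
  have hB := le_finrank_tensorBlock Φ (minusProj (tau k W)) (minusProj (tau k U))
  have h₁ := two_le_finrank_range_plusProj_tau hW
  have h₂ := one_le_finrank_range_minusProj_tau hU
  have h₃ := one_le_finrank_range_minusProj_tau hW
  have h₄ := two_le_finrank_range_plusProj_tau hU
  exact finrank_eq_one_of_isSmall hsmall
    (isSubrep_tensorBlock hfac commute_map_plusProj_tau commute_map_plusProj_tau) hdisj hsup
    (by nlinarith) (Submodule.one_le_finrank_iff.mp (by nlinarith))

lemma finrank_eq_four_of_finrank_tensorBlock_eq_one [FiniteDimensional k W] [FiniteDimensional k U]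
    (hB : Module.finrank k (tensorBlock Φ (minusProj (tau k W)) (minusProj (tau k U))) = 1)
    (hW : 2 ≤ Module.finrank k W) (hU : 2 ≤ Module.finrank k U) : Module.finrank k V = 4 := by
  have hle := le_finrank_tensorBlock Φ (minusProj (tau k W)) (minusProj (tau k U))
  have hW₁ := one_le_finrank_range_minusProj_tau hW
  have hU₁ := one_le_finrank_range_minusProj_tau hU
  have hW₂ : Module.finrank k W = 2 := by
    by_contra h
    have := two_le_finrank_range_minusProj_tau (M := W) (k := k) (by omega)
    nlinarith
  have hU₂ : Module.finrank k U = 2 := by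
    by_contra h
    have := two_le_finrank_range_minusProj_tau (M := U) (k := k) (by omega)
    nlinarith
  rw [← Φ.finrank_eq, Module.finrank_tensorProduct, hW₂, hU₂]

lemma quadSimilitude_of_finrank_tensorBlock_eq_one [FiniteDimensional k V] (hirr : IsIrred ρ)
    (hfac : IsTensorFactorization ρ Φ)
    (hB : Module.finrank k (tensorBlock Φ (minusProj (tau k W)) (minusProj (tau k U))) = 1) :
    QuadSimilitude ρ := by
  set P := (tensorSquareEquiv Φ).conj
    (TensorProduct.map (minusProj (tau k W)) (minusProj (tau k U)))
  obtain ⟨χ, hχ⟩ := exists_character_of_finrank_eq_one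
    (isSubrep_tensorBlock hfac commute_map_minusProj_tau commute_map_minusProj_tau) hB
  obtain ⟨_, ⟨x₀, rfl⟩, hx₀⟩ :=
    Submodule.exists_mem_ne_zero_of_ne_bot (Submodule.one_le_finrank_iff.mp hB.ge)
  obtain ⟨φ, hφ⟩ : ∃ φ : Module.Dual k (V ⊗[k] V), φ (P x₀) ≠ 0 := by
    by_contra! h
    exact hx₀ ((Module.forall_dual_apply_eq_zero_iff k _).mp h)
  refine quadSimilitude_of_functional hirr (f := φ ∘ₗ P)
    (fun h => hφ (by simpa using LinearMap.congr_fun h x₀)) ?_ χ fun g x => ?_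
  · rw [LinearMap.comp_assoc, ← conj_map_tau Φ, ← Module.End.mul_eq_comp, ← conj_mul,
      map_minusProj_tau_mul_map_tau]
  · rw [LinearMap.comp_apply, ← Module.End.mul_apply,
      ← (commute_tprod_conj_map hfac commute_map_minusProj_tau commute_map_minusProj_tau g).eq,
      Module.End.mul_apply, hχ g _ ⟨x, rfl⟩, map_smul, smul_eq_mul, LinearMap.comp_apply]

end TensorFactorization

/-- Isotypic but non-irreducible case: if all irreducible `H`-submodules of a faithful
irreducible `ε`-small representation `V` are pairwise isomorphic, `H` is normal and
non-central, and `V|_H` is not irreducible, then `dim V = 4` and `G` preserves a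
nondegenerate quadratic form up to similitude. -/
theorem small_rep_isotypic_not_irreducible
    (k G V : Type*) [Field k] [IsAlgClosed k] [CharZero k] [Group G] [Finite G]
    [AddCommGroup V] [Module k V] [FiniteDimensional k V]
    (ρ : Representation k G V) (ε : ℤ) (hε : ε = 1 ∨ ε = -1)
    (hfaith : Function.Injective ρ) (hirr : IsIrred ρ) (hsmall : IsSmall ρ ε)
    (H : Subgroup G) (hH : H.Normal) (hHnc : ¬ H ≤ Subgroup.center G)
    (hiso : ∀ (W₁ W₂ : Submodule k V)
      (hW₁ : IsSubrep (ρ.comp H.subtype) W₁) (hW₂ : IsSubrep (ρ.comp H.subtype) W₂),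
      SubIrred (ρ.comp H.subtype) W₁ → SubIrred (ρ.comp H.subtype) W₂ →
      RepIso (subRep (ρ.comp H.subtype) W₁ hW₁) (subRep (ρ.comp H.subtype) W₂ hW₂))
    (hnotirr : ¬ IsIrred (ρ.comp H.subtype)) :
    Module.finrank k V = 4 ∧ QuadSimilitude ρ := by
  have : Nontrivial V := hirr.1
  obtain ⟨W₀, -, hW₀, hW₀irr⟩ :=
    exists_subIrred_le (ρ.comp H.subtype) (X := ⊤) (fun _ _ _ => trivial) top_ne_bot
  have hiso₀ : IsIsotypicOf _ W₀ hW₀ := fun W hW hWirr => hiso W₀ W hW₀ hW hW₀irr hWirr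
  obtain ⟨m, Φ, hΦ⟩ := exists_tensor_equiv_of_isIsotypicOf hiso₀
  have hfac := isTensorFactorization_of_isIsotypicOf hH hW₀irr hiso₀ Φ hΦ
  have hW := two_le_finrank_of_not_le_center hfaith hHnc hW₀irr Φ hΦ
  have hU : 2 ≤ Module.finrank k (Fin m → k) := by
    simpa using two_le_of_not_isIrred hW₀irr Φ hnotirr
  rcases hε with rfl | rfl
  · have hB := finrank_tensorBlock_minusProj_eq_one hsmall hfac hW hU
    exact ⟨finrank_eq_four_of_finrank_tensorBlock_eq_one hB hW hU,
      quadSimilitude_of_finrank_tensorBlock_eq_one hirr hfac hB⟩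
  · exact absurd hsmall (not_isSmall_neg_one_of_isTensorFactorization hfac hW hU)

end SmallRep
end
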